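/- The SHIQ tableaux algorithm terminates when started with any SHIQ-concept D in negation normal form: every sequence of applications of the expansion rules starting from the initial completion tree for D is finite. -/
import Mathlib


/-- SHIQ-roles: role names (indexed by ℕ) and their inverses. -/
inductive Role where
  | atom : ℕ → Role
  | inv  : ℕ → Role
deriving DecidableEq

/-- The function `Inv` on roles: `Inv(R) = R⁻`, `Inv(R⁻) = R`. -/
def Role.Inv : Role → Role
  | .atom r => .inv r
  | .inv r  => .atom r

/-- The underlying role name of a (possibly inverse) role. -/
def Role.name : Role → ℕ
  | .atom r => r
  | .inv r  => r

/-- Concepts of the SHIQ family (with ⊤ and ⊥ for convenience). -/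
inductive DLConcept where
  | top : DLConcept
  | bot : DLConcept
  | atom : ℕ → DLConcept
  | neg : DLConcept → DLConcept
  | and : DLConcept → DLConcept → DLConcept
  | or : DLConcept → DLConcept → DLConcept
  | all : Role → DLConcept → DLConcept
  | ex : Role → DLConcept → DLConcept
  | atleast : ℕ → Role → DLConcept → DLConcept
  | atmost : ℕ → Role → DLConcept → DLConcept
deriving DecidableEq

/-- An interpretation: a (nonempty) domain, a valuation of concept names and
    of role names. -/
structure Interp where
  Dom : Type
  dom_nonempty : Nonempty Dom
  cI : ℕ → Set Dom
  rI : ℕ → Dom → Dom → Prop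

/-- Semantics of (possibly inverse) roles. -/
def Interp.rSem (I : Interp) : Role → I.Dom → I.Dom → Prop
  | .atom r => I.rI r
  | .inv r  => fun x y => I.rI r y x

/-- Semantics of concepts; number restrictions are interpreted by counting
    role successors (via cardinalities, so that infinite sets are handled
    correctly). -/
def Interp.cSem (I : Interp) : DLConcept → Set I.Dom
  | .top => Set.univ
  | .bot => ∅
  | .atom a => I.cI a
  | .neg C => (I.cSem C)ᶜ
  | .and C D => I.cSem C ∩ I.cSem D
  | .or C D => I.cSem C ∪ I.cSem D
  | .all R C => {x | ∀ y, I.rSem R x y → y ∈ I.cSem C}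
  | .ex R C => {x | ∃ y, I.rSem R x y ∧ y ∈ I.cSem C}
  | .atleast n R C => {x | (n : Cardinal) ≤ Cardinal.mk {y // I.rSem R x y ∧ y ∈ I.cSem C}}
  | .atmost n R C => {x | Cardinal.mk {y // I.rSem R x y ∧ y ∈ I.cSem C} ≤ (n : Cardinal)}

/-- `I.Good Rp`: the interpretation interprets every transitive role name
    (member of `Rp`) by a transitive relation. -/
def Interp.Good (I : Interp) (Rp : Set ℕ) : Prop :=
  ∀ r ∈ Rp, Transitive (I.rI r)

/-- The role hierarchy ⊑* generated by a finite set of role inclusion axioms: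
    inverses are added and the transitive-reflexive closure is taken. -/
def SubRole (RIA : List (Role × Role)) : Role → Role → Prop :=
  Relation.ReflTransGen (fun R S => (R, S) ∈ RIA ∨ (R.Inv, S.Inv) ∈ RIA)

/-- `I ⊨ R⁺`: the interpretation satisfies the role hierarchy. -/
def Interp.ModelsRH (I : Interp) (RIA : List (Role × Role)) : Prop :=
  ∀ R S, SubRole RIA R S → ∀ x y, I.rSem R x y → I.rSem S x y

/-- `Trans(R)`: a (possibly inverse) role is transitive iff its name is in `Rp`. -/
def RTrans (Rp : Set ℕ) : Role → Prop
  | .atom r => r ∈ Rp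
  | .inv r  => r ∈ Rp

/-- A role is simple iff it is neither transitive nor has a transitive sub-role. -/
def SimpleRole (Rp : Set ℕ) (RIA : List (Role × Role)) (R : Role) : Prop :=
  ∀ S, SubRole RIA S R → ¬ RTrans Rp S

/-- SHIQ-concepts: number restrictions occur only on simple roles. -/
def DLConcept.IsSHIQ (Rp : Set ℕ) (RIA : List (Role × Role)) : DLConcept → Prop
  | .top | .bot | .atom _ => True
  | .neg C => C.IsSHIQ Rp RIA
  | .and C D | .or C D => C.IsSHIQ Rp RIA ∧ D.IsSHIQ Rp RIA
  | .all _ C | .ex _ C => C.IsSHIQ Rp RIA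
  | .atleast _ R C | .atmost _ R C => SimpleRole Rp RIA R ∧ C.IsSHIQ Rp RIA

/-- Satisfiability of a concept w.r.t. a role hierarchy. -/
def Satisfiable (Rp : Set ℕ) (RIA : List (Role × Role)) (C : DLConcept) : Prop :=
  ∃ I : Interp, I.Good Rp ∧ I.ModelsRH RIA ∧ (I.cSem C).Nonempty

/-- Subsumption of concepts w.r.t. a role hierarchy. -/
def Subsumes (Rp : Set ℕ) (RIA : List (Role × Role)) (C D : DLConcept) : Prop :=
  ∀ I : Interp, I.Good Rp → I.ModelsRH RIA → I.cSem C ⊆ I.cSem D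

/-- Negation normal form: negation occurs only in front of concept names. -/
def DLConcept.IsNNF : DLConcept → Prop
  | .neg (.atom _) => True
  | .neg _ => False
  | .top | .bot | .atom _ => True
  | .and C D | .or C D => C.IsNNF ∧ D.IsNNF
  | .all _ C | .ex _ C => C.IsNNF
  | .atleast _ _ C | .atmost _ _ C => C.IsNNF

/-- `~C`: the negation normal form of `¬C` (for `C` in NNF). -/
def DLConcept.nnfNeg : DLConcept → DLConcept
  | .top => .bot
  | .bot => .top
  | .atom a => .neg (.atom a)
  | .neg C => C
  | .and C D => .or C.nnfNeg D.nnfNeg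
  | .or C D => .and C.nnfNeg D.nnfNeg
  | .all R C => .ex R C.nnfNeg
  | .ex R C => .all R C.nnfNeg
  | .atleast 0 _ _ => .bot
  | .atleast (n+1) R C => .atmost n R C
  | .atmost n R C => .atleast (n + 1) R C

/-- Direct (one-step) subconcepts. -/
inductive DirectSub : DLConcept → DLConcept → Prop
  | neg (C : DLConcept) : DirectSub C (.neg C)
  | andl (C D : DLConcept) : DirectSub C (.and C D)
  | andr (C D : DLConcept) : DirectSub D (.and C D)
  | orl (C D : DLConcept) : DirectSub C (.or C D)
  | orr (C D : DLConcept) : DirectSub D (.or C D)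
  | all (R : Role) (C : DLConcept) : DirectSub C (.all R C)
  | ex (R : Role) (C : DLConcept) : DirectSub C (.ex R C)
  | atleast (n : ℕ) (R : Role) (C : DLConcept) : DirectSub C (.atleast n R C)
  | atmost (n : ℕ) (R : Role) (C : DLConcept) : DirectSub C (.atmost n R C)

/-- `clos(D)`: the smallest set of concepts containing `D` that is closed under
subconcepts and under `~`. -/
inductive InClos (D : DLConcept) : DLConcept → Prop
  | base : InClos D D
  | sub {C C' : DLConcept} : InClos D C → DirectSub C' C → InClos D C'
  | nnf {C : DLConcept} : InClos D C → InClos D C.nnfNeg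

/-- The roles occurring in a concept. -/
def DLConcept.rolesOf : DLConcept → Finset Role
  | .top | .bot | .atom _ => ∅
  | .neg C => C.rolesOf
  | .and C D | .or C D => C.rolesOf ∪ D.rolesOf
  | .all R C | .ex R C => insert R C.rolesOf
  | .atleast _ R C | .atmost _ R C => insert R C.rolesOf

/-- `R_D`: the roles occurring in `D` and in the role hierarchy, together with
their inverses. -/
def RD (D : DLConcept) (RIA : List (Role × Role)) : Finset Role :=
  let base := D.rolesOf ∪ RIA.foldr (fun p acc => insert p.1 (insert p.2 acc)) ∅
  base ∪ base.image Role.Inv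

/-- A completion tree for the SHIQ algorithm: a finite tree (nodes named by
natural numbers, each non-root node pointing to its parent) with node labels
`lab x ⊆ clos(D)`, edge labels `elb x` (the label of the edge from
`parent x` to `x`), and a symmetric inequality relation `neq` (`≐̸`). -/
structure CTree where
  nodes : Finset ℕ
  root : ℕ
  parent : ℕ → ℕ
  lab : ℕ → Finset DLConcept
  elb : ℕ → Finset Role
  neq : ℕ → ℕ → Prop
  root_mem : root ∈ nodes
  parent_mem : ∀ x ∈ nodes, x ≠ root → parent x ∈ nodes
  reach : ∀ x ∈ nodes, ∃ k, parent^[k] x = root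
  neq_symm : ∀ x y, neq x y → neq y x

namespace CTree

/-- `y` is a successor of `x`. -/
def Succ (t : CTree) (x y : ℕ) : Prop :=
  y ∈ t.nodes ∧ y ≠ t.root ∧ t.parent y = x

/-- `y` is an `R`-successor of `x` (w.r.t. the role hierarchy generated by `RIA`). -/
def RSucc (RIA : List (Role × Role)) (t : CTree) (R : Role) (x y : ℕ) : Prop :=
  t.Succ x y ∧ ∃ S ∈ t.elb y, SubRole RIA S R

/-- `y` is an `R`-neighbour of `x`. -/
def RNeighb (RIA : List (Role × Role)) (t : CTree) (R : Role) (x y : ℕ) : Prop :=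
  t.RSucc RIA R x y ∨ t.RSucc RIA R.Inv y x

/-- `x` is a (proper) ancestor of `y`. -/
def Anc (t : CTree) (x y : ℕ) : Prop :=
  y ∈ t.nodes ∧ ∃ k, 0 < k ∧ t.parent^[k] y = x ∧ ∀ j < k, t.parent^[j] y ≠ t.root

/-- The depth of a node (the length of the path from the root to it). -/
noncomputable def depth (t : CTree) (x : ℕ) : ℕ :=
  sInf {k | t.parent^[k] x = t.root}

/-- The pair-wise blocking witness condition: `x` has ancestors `x' = parent x`,
`y`, `y' = parent y` with `L(x) = L(y)`, `L(x') = L(y')` and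
`L(⟨x',x⟩) = L(⟨y',y⟩)` (i.e. `y` blocks `x`). -/
def Cand (t : CTree) (x : ℕ) : Prop :=
  x ∈ t.nodes ∧ x ≠ t.root ∧
  ∃ y, t.Anc y x ∧ y ≠ t.root ∧ t.Anc (t.parent y) x ∧
    t.lab x = t.lab y ∧ t.lab (t.parent x) = t.lab (t.parent y) ∧
    t.elb x = t.elb y

/-- A non-root node whose incoming edge label has been emptied by the ≤-rule. -/
def EmptyEdge (t : CTree) (x : ℕ) : Prop :=
  x ∈ t.nodes ∧ x ≠ t.root ∧ t.elb x = ∅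

/-- `x` is blocked (directly or indirectly): some node on the path from the root
to `x` carries a pair-wise blocking witness or an emptied incoming edge. -/
def Blocked (t : CTree) (x : ℕ) : Prop :=
  ∃ z, (z = x ∨ t.Anc z x) ∧ (t.Cand z ∨ t.EmptyEdge z)

/-- `x` is directly blocked: it carries a pair-wise blocking witness and none of
its ancestors is blocked. -/
def DirectlyBlocked (t : CTree) (x : ℕ) : Prop :=
  t.Cand x ∧ ∀ z, t.Anc z x → ¬ t.Blocked z

/-- `x` is indirectly blocked: one of its ancestors is blocked, or `x` is a
successor of a node with an emptied edge label. -/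
def IndirectlyBlocked (t : CTree) (x : ℕ) : Prop :=
  (∃ z, t.Anc z x ∧ t.Blocked z) ∨ t.EmptyEdge x

/-- A clash: `{A, ¬A} ⊆ L(x)`, or `(≤ n S C) ∈ L(x)` with `n+1` pairwise
`≐̸`-distinct `S`-neighbours of `x` whose labels contain `C`. -/
def Clash (RIA : List (Role × Role)) (t : CTree) : Prop :=
  ∃ x ∈ t.nodes,
    (∃ A : ℕ, DLConcept.atom A ∈ t.lab x ∧ DLConcept.neg (DLConcept.atom A) ∈ t.lab x) ∨
    (∃ n S C, DLConcept.atmost n S C ∈ t.lab x ∧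
      ∃ ys : Fin (n + 1) → ℕ,
        (∀ i, t.RNeighb RIA S x (ys i) ∧ C ∈ t.lab (ys i)) ∧
        ∀ i j, i ≠ j → t.neq (ys i) (ys j))

end CTree

/-- The expansion rules of the SHIQ tableaux algorithm, as a one-step transition
relation between completion trees. -/
inductive Step (Rp : Set ℕ) (RIA : List (Role × Role)) : CTree → CTree → Prop
  | conj (t t' : CTree) (x : ℕ) (C₁ C₂ : DLConcept)
      (hx : x ∈ t.nodes) (hC : DLConcept.and C₁ C₂ ∈ t.lab x)
      (hnib : ¬ t.IndirectlyBlocked x)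
      (hnew : ¬ ({C₁, C₂} ⊆ t.lab x))
      (hn : t'.nodes = t.nodes) (hr : t'.root = t.root) (hp : t'.parent = t.parent)
      (hl : t'.lab = Function.update t.lab x (t.lab x ∪ {C₁, C₂}))
      (he : t'.elb = t.elb) (hq : t'.neq = t.neq) :
      Step Rp RIA t t'
  | disj (t t' : CTree) (x : ℕ) (C₁ C₂ E : DLConcept)
      (hx : x ∈ t.nodes) (hC : DLConcept.or C₁ C₂ ∈ t.lab x)
      (hnib : ¬ t.IndirectlyBlocked x)
      (hnew : C₁ ∉ t.lab x ∧ C₂ ∉ t.lab x)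
      (hE : E = C₁ ∨ E = C₂)
      (hn : t'.nodes = t.nodes) (hr : t'.root = t.root) (hp : t'.parent = t.parent)
      (hl : t'.lab = Function.update t.lab x (insert E (t.lab x)))
      (he : t'.elb = t.elb) (hq : t'.neq = t.neq) :
      Step Rp RIA t t'
  | exists_ (t t' : CTree) (x y : ℕ) (S : Role) (C : DLConcept)
      (hx : x ∈ t.nodes) (hC : DLConcept.ex S C ∈ t.lab x)
      (hnb : ¬ t.Blocked x)
      (hnew : ¬ ∃ z, t.RNeighb RIA S x z ∧ C ∈ t.lab z)
      (hy : y ∉ t.nodes)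
      (hn : t'.nodes = insert y t.nodes) (hr : t'.root = t.root)
      (hp : t'.parent = Function.update t.parent y x)
      (hl : t'.lab = Function.update t.lab y {C})
      (he : t'.elb = Function.update t.elb y {S})
      (hq : t'.neq = t.neq) :
      Step Rp RIA t t'
  | all (t t' : CTree) (x y : ℕ) (S : Role) (C : DLConcept)
      (hx : x ∈ t.nodes) (hC : DLConcept.all S C ∈ t.lab x)
      (hnib : ¬ t.IndirectlyBlocked x)
      (hng : t.RNeighb RIA S x y) (hnew : C ∉ t.lab y)
      (hn : t'.nodes = t.nodes) (hr : t'.root = t.root) (hp : t'.parent = t.parent)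
      (hl : t'.lab = Function.update t.lab y (insert C (t.lab y)))
      (he : t'.elb = t.elb) (hq : t'.neq = t.neq) :
      Step Rp RIA t t'
  | allTrans (t t' : CTree) (x y : ℕ) (R S : Role) (C : DLConcept)
      (hx : x ∈ t.nodes) (hC : DLConcept.all S C ∈ t.lab x)
      (hnib : ¬ t.IndirectlyBlocked x)
      (htr : RTrans Rp R) (hsub : SubRole RIA R S)
      (hng : t.RNeighb RIA R x y) (hnew : DLConcept.all R C ∉ t.lab y)
      (hn : t'.nodes = t.nodes) (hr : t'.root = t.root) (hp : t'.parent = t.parent)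
      (hl : t'.lab = Function.update t.lab y (insert (DLConcept.all R C) (t.lab y)))
      (he : t'.elb = t.elb) (hq : t'.neq = t.neq) :
      Step Rp RIA t t'
  | choose (t t' : CTree) (x y : ℕ) (n : ℕ) (S : Role) (C E : DLConcept)
      (hx : x ∈ t.nodes)
      (hC : DLConcept.atleast n S C ∈ t.lab x ∨ DLConcept.atmost n S C ∈ t.lab x)
      (hnib : ¬ t.IndirectlyBlocked x)
      (hng : t.RNeighb RIA S x y)
      (hnew : C ∉ t.lab y ∧ C.nnfNeg ∉ t.lab y)
      (hE : E = C ∨ E = C.nnfNeg)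
      (hn : t'.nodes = t.nodes) (hr : t'.root = t.root) (hp : t'.parent = t.parent)
      (hl : t'.lab = Function.update t.lab y (insert E (t.lab y)))
      (he : t'.elb = t.elb) (hq : t'.neq = t.neq) :
      Step Rp RIA t t'
  | geq (t t' : CTree) (x : ℕ) (n : ℕ) (S : Role) (C : DLConcept) (ys : Fin n → ℕ)
      (hx : x ∈ t.nodes) (hC : DLConcept.atleast n S C ∈ t.lab x)
      (hnb : ¬ t.Blocked x)
      (hnew : ¬ ∃ zs : Fin n → ℕ,
        (∀ i, t.RNeighb RIA S x (zs i) ∧ C ∈ t.lab (zs i)) ∧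
        ∀ i j, i ≠ j → t.neq (zs i) (zs j))
      (hinj : Function.Injective ys) (hfresh : ∀ i, ys i ∉ t.nodes)
      (hn : t'.nodes = t.nodes ∪ Finset.image ys Finset.univ)
      (hr : t'.root = t.root)
      (hp1 : ∀ i, t'.parent (ys i) = x)
      (hp2 : ∀ z, (∀ i, z ≠ ys i) → t'.parent z = t.parent z)
      (hl1 : ∀ i, t'.lab (ys i) = {C})
      (hl2 : ∀ z, (∀ i, z ≠ ys i) → t'.lab z = t.lab z)
      (he1 : ∀ i, t'.elb (ys i) = {S})
      (he2 : ∀ z, (∀ i, z ≠ ys i) → t'.elb z = t.elb z)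
      (hq : ∀ u v, t'.neq u v ↔
        (t.neq u v ∨ ∃ i j, i ≠ j ∧ u = ys i ∧ v = ys j)) :
      Step Rp RIA t t'
  | leqSucc (t t' : CTree) (x y z : ℕ) (n : ℕ) (S : Role) (C : DLConcept)
      (hx : x ∈ t.nodes) (hC : DLConcept.atmost n S C ∈ t.lab x)
      (hnib : ¬ t.IndirectlyBlocked x)
      (hcount : n < {w | t.RNeighb RIA S x w ∧ C ∈ t.lab w}.ncard)
      (hy : t.RNeighb RIA S x y) (hz : t.RNeighb RIA S x z)
      (hCy : C ∈ t.lab y) (hCz : C ∈ t.lab z)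
      (hyz : y ≠ z) (hnq : ¬ t.neq y z) (hyanc : ¬ t.Anc y x)
      (hzanc : ¬ t.Anc z x)
      (hn : t'.nodes = t.nodes) (hr : t'.root = t.root) (hp : t'.parent = t.parent)
      (hlz : t'.lab z = t.lab z ∪ t.lab y)
      (hlo : ∀ w, w ≠ z → t'.lab w = t.lab w)
      (hez : t'.elb z = t.elb z ∪ t.elb y)
      (hey : t'.elb y = ∅)
      (heo : ∀ w, w ≠ z → w ≠ y → t'.elb w = t.elb w)
      (hq : ∀ u v, t'.neq u v ↔
        (t.neq u v ∨ (t.neq u y ∧ v = z) ∨ (u = z ∧ t.neq v y))) :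
      Step Rp RIA t t'
  | leqAnc (t t' : CTree) (x y z : ℕ) (n : ℕ) (S : Role) (C : DLConcept)
      (hx : x ∈ t.nodes) (hC : DLConcept.atmost n S C ∈ t.lab x)
      (hnib : ¬ t.IndirectlyBlocked x)
      (hcount : n < {w | t.RNeighb RIA S x w ∧ C ∈ t.lab w}.ncard)
      (hy : t.RNeighb RIA S x y) (hz : t.RNeighb RIA S x z)
      (hCy : C ∈ t.lab y) (hCz : C ∈ t.lab z)
      (hyz : y ≠ z) (hnq : ¬ t.neq y z) (hyanc : ¬ t.Anc y x)
      (hzanc : t.Anc z x)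
      (hn : t'.nodes = t.nodes) (hr : t'.root = t.root) (hp : t'.parent = t.parent)
      (hlz : t'.lab z = t.lab z ∪ t.lab y)
      (hlo : ∀ w, w ≠ z → t'.lab w = t.lab w)
      (hex : t'.elb x = t.elb x ∪ (t.elb y).image Role.Inv)
      (hey : t'.elb y = ∅)
      (heo : ∀ w, w ≠ x → w ≠ y → t'.elb w = t.elb w)
      (hq : ∀ u v, t'.neq u v ↔
        (t.neq u v ∨ (t.neq u y ∧ v = z) ∨ (u = z ∧ t.neq v y))) :
      Step Rp RIA t t'

/-- The initial completion tree: a single root node labelled `{D}`. -/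
def initTree (D : DLConcept) : CTree where
  nodes := {0}
  root := 0
  parent := id
  lab := fun x => if x = 0 then {D} else ∅
  elb := fun _ => ∅
  neq := fun _ _ => False
  root_mem := by simp
  parent_mem := by intro x hx hne; simp at hx; exact absurd hx hne
  reach := by intro x hx; simp at hx; exact ⟨0, by simpa using hx⟩
  neq_symm := by intro _ _ h; exact h

/-- A completion tree is complete iff no expansion rule is applicable to it. -/
def Complete (Rp : Set ℕ) (RIA : List (Role × Role)) (t : CTree) : Prop :=
  ¬ ∃ t', Step Rp RIA t t'

namespace SHIQTerm
open DLConcept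

@[simp] lemma Role.inv_inv (R : Role) : R.Inv.Inv = R := by cases R <;> rfl

lemma subrole_inv {RIA : List (Role × Role)} {A B : Role} (h : SubRole RIA A B) :
    SubRole RIA A.Inv B.Inv := by
  induction h with
  | refl => exact Relation.ReflTransGen.refl
  | tail _ hbc ih =>
      refine ih.tail ?_
      rcases hbc with h | h
      · exact Or.inr (by simpa using h)
      · exact Or.inl h

/-- Subconcepts. -/
def subc : DLConcept → Finset DLConcept
  | .top => {.top}
  | .bot => {.bot}
  | .atom a => {.atom a}
  | .neg C => insert (.neg C) (subc C)
  | .and C D => insert (.and C D) (subc C ∪ subc D)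
  | .or C D => insert (.or C D) (subc C ∪ subc D)
  | .all R C => insert (.all R C) (subc C)
  | .ex R C => insert (.ex R C) (subc C)
  | .atleast n R C => insert (.atleast n R C) (subc C)
  | .atmost n R C => insert (.atmost n R C) (subc C)

lemma self_mem_subc (C : DLConcept) : C ∈ subc C := by
  cases C <;> simp [subc]

lemma subc_trans : ∀ (B : DLConcept) {C}, C ∈ subc B → subc C ⊆ subc B := by
  intro B
  induction B with
  | top => intro C h; simp [subc] at h; subst h; exact subset_rfl
  | bot => intro C h; simp [subc] at h; subst h; exact subset_rfl
  | atom a => intro C h; simp [subc] at h; subst h; exact subset_rfl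
  | neg A ih =>
      intro C h
      rcases Finset.mem_insert.1 h with h | h
      · subst h; exact subset_rfl
      · exact (ih h).trans (Finset.subset_insert _ _)
  | and A B ihA ihB =>
      intro C h
      rcases Finset.mem_insert.1 h with h | h
      · subst h; exact subset_rfl
      · rcases Finset.mem_union.1 h with h | h
        · exact (ihA h).trans ((Finset.subset_union_left).trans (Finset.subset_insert _ _))
        · exact (ihB h).trans ((Finset.subset_union_right).trans (Finset.subset_insert _ _))
  | or A B ihA ihB =>
      intro C h
      rcases Finset.mem_insert.1 h with h | h
      · subst h; exact subset_rfl
      · rcases Finset.mem_union.1 h with h | h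
        · exact (ihA h).trans ((Finset.subset_union_left).trans (Finset.subset_insert _ _))
        · exact (ihB h).trans ((Finset.subset_union_right).trans (Finset.subset_insert _ _))
  | all R A ih =>
      intro C h
      rcases Finset.mem_insert.1 h with h | h
      · subst h; exact subset_rfl
      · exact (ih h).trans (Finset.subset_insert _ _)
  | ex R A ih =>
      intro C h
      rcases Finset.mem_insert.1 h with h | h
      · subst h; exact subset_rfl
      · exact (ih h).trans (Finset.subset_insert _ _)
  | atleast n R A ih =>
      intro C h
      rcases Finset.mem_insert.1 h with h | h
      · subst h; exact subset_rfl
      · exact (ih h).trans (Finset.subset_insert _ _)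
  | atmost n R A ih =>
      intro C h
      rcases Finset.mem_insert.1 h with h | h
      · subst h; exact subset_rfl
      · exact (ih h).trans (Finset.subset_insert _ _)

lemma nnf_of_mem_subc : ∀ (B : DLConcept), B.IsNNF → ∀ {C}, C ∈ subc B → C.IsNNF := by
  intro B
  induction B with
  | top => intro _ C h; simp [subc] at h; subst h; trivial
  | bot => intro _ C h; simp [subc] at h; subst h; trivial
  | atom a => intro _ C h; simp [subc] at h; subst h; trivial
  | neg A ih =>
      intro hB C h
      cases A with
      | atom a =>
          rcases Finset.mem_insert.1 h with h | h
          · subst h; trivial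
          · simp [subc] at h; subst h; trivial
      | top => exact absurd hB (by simp [IsNNF])
      | bot => exact absurd hB (by simp [IsNNF])
      | neg _ => exact absurd hB (by simp [IsNNF])
      | and _ _ => exact absurd hB (by simp [IsNNF])
      | or _ _ => exact absurd hB (by simp [IsNNF])
      | all _ _ => exact absurd hB (by simp [IsNNF])
      | ex _ _ => exact absurd hB (by simp [IsNNF])
      | atleast _ _ _ => exact absurd hB (by simp [IsNNF])
      | atmost _ _ _ => exact absurd hB (by simp [IsNNF])
  | and A B ihA ihB =>
      intro hB C h
      rcases Finset.mem_insert.1 h with h | h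
      · subst h; exact hB
      · rcases Finset.mem_union.1 h with h | h
        · exact ihA hB.1 h
        · exact ihB hB.2 h
  | or A B ihA ihB =>
      intro hB C h
      rcases Finset.mem_insert.1 h with h | h
      · subst h; exact hB
      · rcases Finset.mem_union.1 h with h | h
        · exact ihA hB.1 h
        · exact ihB hB.2 h
  | all R A ih =>
      intro hB C h
      rcases Finset.mem_insert.1 h with h | h
      · subst h; exact hB
      · exact ih hB h
  | ex R A ih =>
      intro hB C h
      rcases Finset.mem_insert.1 h with h | h
      · subst h; exact hB
      · exact ih hB h
  | atleast n R A ih =>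
      intro hB C h
      rcases Finset.mem_insert.1 h with h | h
      · subst h; exact hB
      · exact ih hB h
  | atmost n R A ih =>
      intro hB C h
      rcases Finset.mem_insert.1 h with h | h
      · subst h; exact hB
      · exact ih hB h

/-- "No ≥0 on the boolean/modal spine". -/
def NoZ : DLConcept → Prop
  | .atleast 0 _ _ => False
  | .and C D | .or C D => NoZ C ∧ NoZ D
  | .all _ C | .ex _ C => NoZ C
  | _ => True

lemma isNNF_nnfNeg : ∀ {C : DLConcept}, C.IsNNF → C.nnfNeg.IsNNF := by
  intro C
  induction C with
  | top => intro _; trivial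
  | bot => intro _; trivial
  | atom a => intro _; trivial
  | neg A _ =>
      intro h
      cases A with
      | atom a => simpa [nnfNeg, IsNNF] using trivial
      | top => exact absurd h (by simp [IsNNF])
      | bot => exact absurd h (by simp [IsNNF])
      | neg _ => exact absurd h (by simp [IsNNF])
      | and _ _ => exact absurd h (by simp [IsNNF])
      | or _ _ => exact absurd h (by simp [IsNNF])
      | all _ _ => exact absurd h (by simp [IsNNF])
      | ex _ _ => exact absurd h (by simp [IsNNF])
      | atleast _ _ _ => exact absurd h (by simp [IsNNF])
      | atmost _ _ _ => exact absurd h (by simp [IsNNF])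
  | and A B ihA ihB => intro h; exact ⟨ihA h.1, ihB h.2⟩
  | or A B ihA ihB => intro h; exact ⟨ihA h.1, ihB h.2⟩
  | all R A ih => intro h; exact ih h
  | ex R A ih => intro h; exact ih h
  | atleast n R A ih =>
      intro h
      cases n with
      | zero => trivial
      | succ m => exact h
  | atmost n R A ih => intro h; exact h

lemma noZ_nnfNeg : ∀ {C : DLConcept}, C.IsNNF → NoZ C.nnfNeg := by
  intro C
  induction C with
  | top => intro _; trivial
  | bot => intro _; trivial
  | atom a => intro _; trivial
  | neg A _ =>
      intro h
      cases A with
      | atom a => trivial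
      | top => exact absurd h (by simp [IsNNF])
      | bot => exact absurd h (by simp [IsNNF])
      | neg _ => exact absurd h (by simp [IsNNF])
      | and _ _ => exact absurd h (by simp [IsNNF])
      | or _ _ => exact absurd h (by simp [IsNNF])
      | all _ _ => exact absurd h (by simp [IsNNF])
      | ex _ _ => exact absurd h (by simp [IsNNF])
      | atleast _ _ _ => exact absurd h (by simp [IsNNF])
      | atmost _ _ _ => exact absurd h (by simp [IsNNF])
  | and A B ihA ihB => intro h; exact ⟨ihA h.1, ihB h.2⟩
  | or A B ihA ihB => intro h; exact ⟨ihA h.1, ihB h.2⟩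
  | all R A ih => intro h; exact ih h
  | ex R A ih => intro h; exact ih h
  | atleast n R A ih =>
      intro h
      cases n with
      | zero => trivial
      | succ m => trivial
  | atmost n R A ih => intro _; trivial

lemma nnfNeg_nnfNeg : ∀ {C : DLConcept}, C.IsNNF → NoZ C → C.nnfNeg.nnfNeg = C := by
  intro C
  induction C with
  | top => intro _ _; rfl
  | bot => intro _ _; rfl
  | atom a => intro _ _; rfl
  | neg A _ =>
      intro h _
      cases A with
      | atom a => rfl
      | top => exact absurd h (by simp [IsNNF])
      | bot => exact absurd h (by simp [IsNNF])
      | neg _ => exact absurd h (by simp [IsNNF])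
      | and _ _ => exact absurd h (by simp [IsNNF])
      | or _ _ => exact absurd h (by simp [IsNNF])
      | all _ _ => exact absurd h (by simp [IsNNF])
      | ex _ _ => exact absurd h (by simp [IsNNF])
      | atleast _ _ _ => exact absurd h (by simp [IsNNF])
      | atmost _ _ _ => exact absurd h (by simp [IsNNF])
  | and A B ihA ihB =>
      intro h hz
      simp only [nnfNeg]
      rw [ihA h.1 hz.1, ihB h.2 hz.2]
  | or A B ihA ihB =>
      intro h hz
      simp only [nnfNeg]
      rw [ihA h.1 hz.1, ihB h.2 hz.2]
  | all R A ih =>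
      intro h hz
      simp only [nnfNeg]
      rw [ih h hz]
  | ex R A ih =>
      intro h hz
      simp only [nnfNeg]
      rw [ih h hz]
  | atleast n R A ih =>
      intro h hz
      cases n with
      | zero => exact absurd hz (by simp [NoZ])
      | succ m => rfl
  | atmost n R A ih => intro _ _; rfl

end SHIQTerm

namespace SHIQTerm
open DLConcept

lemma neg_nnf {A : DLConcept} (h : (DLConcept.neg A).IsNNF) : ∃ a, A = .atom a := by
  cases A with
  | atom a => exact ⟨a, rfl⟩
  | top => exact absurd h (by simp [IsNNF])
  | bot => exact absurd h (by simp [IsNNF])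
  | neg _ => exact absurd h (by simp [IsNNF])
  | and _ _ => exact absurd h (by simp [IsNNF])
  | or _ _ => exact absurd h (by simp [IsNNF])
  | all _ _ => exact absurd h (by simp [IsNNF])
  | ex _ _ => exact absurd h (by simp [IsNNF])
  | atleast _ _ _ => exact absurd h (by simp [IsNNF])
  | atmost _ _ _ => exact absurd h (by simp [IsNNF])

/-- The base closure set: subconcepts of `D` together with their `~`-images
(twice). -/
def U (D : DLConcept) : Finset DLConcept :=
  subc D ∪ (subc D).image DLConcept.nnfNeg ∪
    (subc D).image (fun c => c.nnfNeg.nnfNeg)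

lemma mem_U_iff {D C : DLConcept} :
    C ∈ U D ↔ ∃ C₀ ∈ subc D, C = C₀ ∨ C = C₀.nnfNeg ∨ C = C₀.nnfNeg.nnfNeg := by
  simp only [U, Finset.mem_union, Finset.mem_image]
  constructor
  · rintro ((h | ⟨c, hc, rfl⟩) | ⟨c, hc, rfl⟩)
    · exact ⟨C, h, Or.inl rfl⟩
    · exact ⟨c, hc, Or.inr (Or.inl rfl)⟩
    · exact ⟨c, hc, Or.inr (Or.inr rfl)⟩
  · rintro ⟨c, hc, (rfl | rfl | rfl)⟩
    · exact Or.inl (Or.inl hc)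
    · exact Or.inl (Or.inr ⟨c, hc, rfl⟩)
    · exact Or.inr ⟨c, hc, rfl⟩

section Closure
variable {D : DLConcept} (hD : D.IsNNF)

include hD

lemma nnf_of_mem_U {C : DLConcept} (h : C ∈ U D) : C.IsNNF := by
  rcases mem_U_iff.1 h with ⟨c, hc, (rfl | rfl | rfl)⟩
  · exact nnf_of_mem_subc D hD hc
  · exact isNNF_nnfNeg (nnf_of_mem_subc D hD hc)
  · exact isNNF_nnfNeg (isNNF_nnfNeg (nnf_of_mem_subc D hD hc))

lemma U_nn {C : DLConcept} (h : C ∈ U D) : C.nnfNeg ∈ U D := by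
  rcases mem_U_iff.1 h with ⟨c, hc, (heq | rfl | rfl)⟩
  · subst heq; exact mem_U_iff.2 ⟨C, hc, Or.inr (Or.inl rfl)⟩
  · exact mem_U_iff.2 ⟨c, hc, Or.inr (Or.inr rfl)⟩
  · have h3 : c.nnfNeg.nnfNeg.nnfNeg = c.nnfNeg :=
      nnfNeg_nnfNeg (isNNF_nnfNeg (nnf_of_mem_subc D hD hc))
        (noZ_nnfNeg (nnf_of_mem_subc D hD hc))
    rw [h3]
    exact mem_U_iff.2 ⟨c, hc, Or.inr (Or.inl rfl)⟩

omit hD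

lemma subc_and {A B : DLConcept} (h : DLConcept.and A B ∈ subc D) :
    A ∈ subc D ∧ B ∈ subc D := by
  have h1 := subc_trans D h
  constructor
  · exact h1 (by simp [subc, Finset.mem_insert, Finset.mem_union, self_mem_subc])
  · exact h1 (by simp [subc, Finset.mem_insert, Finset.mem_union, self_mem_subc])

lemma subc_or {A B : DLConcept} (h : DLConcept.or A B ∈ subc D) :
    A ∈ subc D ∧ B ∈ subc D := by
  have h1 := subc_trans D h
  constructor
  · exact h1 (by simp [subc, Finset.mem_insert, Finset.mem_union, self_mem_subc])
  · exact h1 (by simp [subc, Finset.mem_insert, Finset.mem_union, self_mem_subc])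

lemma subc_all {R : Role} {A : DLConcept} (h : DLConcept.all R A ∈ subc D) :
    A ∈ subc D :=
  subc_trans D h (by simp [subc, self_mem_subc])

lemma subc_ex {R : Role} {A : DLConcept} (h : DLConcept.ex R A ∈ subc D) :
    A ∈ subc D :=
  subc_trans D h (by simp [subc, self_mem_subc])

lemma subc_atleast {n : ℕ} {R : Role} {A : DLConcept}
    (h : DLConcept.atleast n R A ∈ subc D) : A ∈ subc D :=
  subc_trans D h (by simp [subc, self_mem_subc])

lemma subc_atmost {n : ℕ} {R : Role} {A : DLConcept}
    (h : DLConcept.atmost n R A ∈ subc D) : A ∈ subc D :=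
  subc_trans D h (by simp [subc, self_mem_subc])

lemma mem_U_of_subc {C : DLConcept} (h : C ∈ subc D) : C ∈ U D :=
  mem_U_iff.2 ⟨C, h, Or.inl rfl⟩

lemma mem_U_nn_of_subc {C : DLConcept} (h : C ∈ subc D) : C.nnfNeg ∈ U D :=
  mem_U_iff.2 ⟨C, h, Or.inr (Or.inl rfl)⟩

lemma mem_U_nn2_of_subc {C : DLConcept} (h : C ∈ subc D) :
    C.nnfNeg.nnfNeg ∈ U D :=
  mem_U_iff.2 ⟨C, h, Or.inr (Or.inr rfl)⟩

include hD

lemma U_and {C₁ C₂ : DLConcept} (h : DLConcept.and C₁ C₂ ∈ U D) :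
    C₁ ∈ U D ∧ C₂ ∈ U D := by
  rcases mem_U_iff.1 h with ⟨c, hc, heq | heq | heq⟩
  · rcases subc_and (heq ▸ hc) with ⟨h1, h2⟩
    exact ⟨mem_U_of_subc h1, mem_U_of_subc h2⟩
  · have hnnf := nnf_of_mem_subc D hD hc
    cases c with
    | or A B =>
        simp only [nnfNeg, DLConcept.or.injEq, DLConcept.and.injEq] at heq
        rcases subc_or hc with ⟨h1, h2⟩
        exact ⟨heq.1 ▸ mem_U_nn_of_subc h1, heq.2 ▸ mem_U_nn_of_subc h2⟩
    | neg A =>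
        obtain ⟨a, rfl⟩ := neg_nnf hnnf
        simp [nnfNeg] at heq
    | top => simp [nnfNeg] at heq
    | bot => simp [nnfNeg] at heq
    | atom a => simp [nnfNeg] at heq
    | and A B => simp [nnfNeg] at heq
    | all R A => simp [nnfNeg] at heq
    | ex R A => simp [nnfNeg] at heq
    | atleast n R A => cases n <;> simp [nnfNeg] at heq
    | atmost n R A => simp [nnfNeg] at heq
  · have hnnf := nnf_of_mem_subc D hD hc
    cases c with
    | and A B =>
        simp only [nnfNeg, DLConcept.and.injEq] at heq
        rcases subc_and hc with ⟨h1, h2⟩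
        exact ⟨heq.1 ▸ mem_U_nn2_of_subc h1, heq.2 ▸ mem_U_nn2_of_subc h2⟩
    | neg A =>
        obtain ⟨a, rfl⟩ := neg_nnf hnnf
        simp [nnfNeg] at heq
    | top => simp [nnfNeg] at heq
    | bot => simp [nnfNeg] at heq
    | atom a => simp [nnfNeg] at heq
    | or A B => simp [nnfNeg] at heq
    | all R A => simp [nnfNeg] at heq
    | ex R A => simp [nnfNeg] at heq
    | atleast n R A => cases n <;> simp [nnfNeg] at heq
    | atmost n R A => simp [nnfNeg] at heq

end Closure
end SHIQTerm

namespace SHIQTerm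
open DLConcept

section Closure2
variable {D : DLConcept} (hD : D.IsNNF)

include hD

lemma U_or {C₁ C₂ : DLConcept} (h : DLConcept.or C₁ C₂ ∈ U D) :
    C₁ ∈ U D ∧ C₂ ∈ U D := by
  rcases mem_U_iff.1 h with ⟨c, hc, heq | heq | heq⟩
  · rcases subc_or (heq ▸ hc) with ⟨h1, h2⟩
    exact ⟨mem_U_of_subc h1, mem_U_of_subc h2⟩
  · have hnnf := nnf_of_mem_subc D hD hc
    cases c with
    | and A B =>
        simp only [nnfNeg, DLConcept.or.injEq] at heq
        rcases subc_and hc with ⟨h1, h2⟩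
        exact ⟨heq.1 ▸ mem_U_nn_of_subc h1, heq.2 ▸ mem_U_nn_of_subc h2⟩
    | neg A =>
        obtain ⟨a, rfl⟩ := neg_nnf hnnf
        simp [nnfNeg] at heq
    | top => simp [nnfNeg] at heq
    | bot => simp [nnfNeg] at heq
    | atom a => simp [nnfNeg] at heq
    | or A B => simp [nnfNeg] at heq
    | all R A => simp [nnfNeg] at heq
    | ex R A => simp [nnfNeg] at heq
    | atleast n R A => cases n <;> simp [nnfNeg] at heq
    | atmost n R A => simp [nnfNeg] at heq
  · have hnnf := nnf_of_mem_subc D hD hc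
    cases c with
    | or A B =>
        simp only [nnfNeg, DLConcept.or.injEq] at heq
        rcases subc_or hc with ⟨h1, h2⟩
        exact ⟨heq.1 ▸ mem_U_nn2_of_subc h1, heq.2 ▸ mem_U_nn2_of_subc h2⟩
    | neg A =>
        obtain ⟨a, rfl⟩ := neg_nnf hnnf
        simp [nnfNeg] at heq
    | top => simp [nnfNeg] at heq
    | bot => simp [nnfNeg] at heq
    | atom a => simp [nnfNeg] at heq
    | and A B => simp [nnfNeg] at heq
    | all R A => simp [nnfNeg] at heq
    | ex R A => simp [nnfNeg] at heq
    | atleast n R A => cases n <;> simp [nnfNeg] at heq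
    | atmost n R A => simp [nnfNeg] at heq

lemma U_ex {S : Role} {C : DLConcept} (h : DLConcept.ex S C ∈ U D) : C ∈ U D := by
  rcases mem_U_iff.1 h with ⟨c, hc, heq | heq | heq⟩
  · exact mem_U_of_subc (subc_ex (heq ▸ hc))
  · have hnnf := nnf_of_mem_subc D hD hc
    cases c with
    | all R A =>
        simp only [nnfNeg, DLConcept.ex.injEq] at heq
        exact heq.2 ▸ mem_U_nn_of_subc (subc_all hc)
    | neg A =>
        obtain ⟨a, rfl⟩ := neg_nnf hnnf
        simp [nnfNeg] at heq
    | top => simp [nnfNeg] at heq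
    | bot => simp [nnfNeg] at heq
    | atom a => simp [nnfNeg] at heq
    | and A B => simp [nnfNeg] at heq
    | or A B => simp [nnfNeg] at heq
    | ex R A => simp [nnfNeg] at heq
    | atleast n R A => cases n <;> simp [nnfNeg] at heq
    | atmost n R A => simp [nnfNeg] at heq
  · have hnnf := nnf_of_mem_subc D hD hc
    cases c with
    | ex R A =>
        simp only [nnfNeg, DLConcept.ex.injEq] at heq
        exact heq.2 ▸ mem_U_nn2_of_subc (subc_ex hc)
    | neg A =>
        obtain ⟨a, rfl⟩ := neg_nnf hnnf
        simp [nnfNeg] at heq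
    | top => simp [nnfNeg] at heq
    | bot => simp [nnfNeg] at heq
    | atom a => simp [nnfNeg] at heq
    | and A B => simp [nnfNeg] at heq
    | or A B => simp [nnfNeg] at heq
    | all R A => simp [nnfNeg] at heq
    | atleast n R A => cases n <;> simp [nnfNeg] at heq
    | atmost n R A => simp [nnfNeg] at heq

lemma U_all {S : Role} {C : DLConcept} (h : DLConcept.all S C ∈ U D) : C ∈ U D := by
  rcases mem_U_iff.1 h with ⟨c, hc, heq | heq | heq⟩
  · exact mem_U_of_subc (subc_all (heq ▸ hc))
  · have hnnf := nnf_of_mem_subc D hD hc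
    cases c with
    | ex R A =>
        simp only [nnfNeg, DLConcept.all.injEq] at heq
        exact heq.2 ▸ mem_U_nn_of_subc (subc_ex hc)
    | neg A =>
        obtain ⟨a, rfl⟩ := neg_nnf hnnf
        simp [nnfNeg] at heq
    | top => simp [nnfNeg] at heq
    | bot => simp [nnfNeg] at heq
    | atom a => simp [nnfNeg] at heq
    | and A B => simp [nnfNeg] at heq
    | or A B => simp [nnfNeg] at heq
    | all R A => simp [nnfNeg] at heq
    | atleast n R A => cases n <;> simp [nnfNeg] at heq
    | atmost n R A => simp [nnfNeg] at heq
  · have hnnf := nnf_of_mem_subc D hD hc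
    cases c with
    | all R A =>
        simp only [nnfNeg, DLConcept.all.injEq] at heq
        exact heq.2 ▸ mem_U_nn2_of_subc (subc_all hc)
    | neg A =>
        obtain ⟨a, rfl⟩ := neg_nnf hnnf
        simp [nnfNeg] at heq
    | top => simp [nnfNeg] at heq
    | bot => simp [nnfNeg] at heq
    | atom a => simp [nnfNeg] at heq
    | and A B => simp [nnfNeg] at heq
    | or A B => simp [nnfNeg] at heq
    | ex R A => simp [nnfNeg] at heq
    | atleast n R A => cases n <;> simp [nnfNeg] at heq
    | atmost n R A => simp [nnfNeg] at heq

lemma U_atleast_body {n : ℕ} {S : Role} {C : DLConcept}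
    (h : DLConcept.atleast n S C ∈ U D) : C ∈ subc D := by
  rcases mem_U_iff.1 h with ⟨c, hc, heq | heq | heq⟩
  · exact subc_atleast (heq ▸ hc)
  · cases c with
    | atmost m R A =>
        simp only [nnfNeg, DLConcept.atleast.injEq] at heq
        exact heq.2.2 ▸ subc_atmost hc
    | neg A =>
        obtain ⟨a, rfl⟩ := neg_nnf (nnf_of_mem_subc D hD hc)
        simp [nnfNeg] at heq
    | top => simp [nnfNeg] at heq
    | bot => simp [nnfNeg] at heq
    | atom a => simp [nnfNeg] at heq
    | and A B => simp [nnfNeg] at heq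
    | or A B => simp [nnfNeg] at heq
    | all R A => simp [nnfNeg] at heq
    | ex R A => simp [nnfNeg] at heq
    | atleast m R A => cases m <;> simp [nnfNeg] at heq
  · cases c with
    | atleast m R A =>
        cases m with
        | zero => simp [nnfNeg] at heq
        | succ m' =>
            simp only [nnfNeg, DLConcept.atleast.injEq] at heq
            exact heq.2.2 ▸ subc_atleast hc
    | neg A =>
        obtain ⟨a, rfl⟩ := neg_nnf (nnf_of_mem_subc D hD hc)
        simp [nnfNeg] at heq
    | top => simp [nnfNeg] at heq
    | bot => simp [nnfNeg] at heq
    | atom a => simp [nnfNeg] at heq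
    | and A B => simp [nnfNeg] at heq
    | or A B => simp [nnfNeg] at heq
    | all R A => simp [nnfNeg] at heq
    | ex R A => simp [nnfNeg] at heq
    | atmost m R A => simp [nnfNeg] at heq

lemma U_atmost_body {n : ℕ} {S : Role} {C : DLConcept}
    (h : DLConcept.atmost n S C ∈ U D) : C ∈ subc D := by
  rcases mem_U_iff.1 h with ⟨c, hc, heq | heq | heq⟩
  · exact subc_atmost (heq ▸ hc)
  · cases c with
    | atleast m R A =>
        cases m with
        | zero => simp [nnfNeg] at heq
        | succ m' =>
            simp only [nnfNeg, DLConcept.atmost.injEq] at heq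
            exact heq.2.2 ▸ subc_atleast hc
    | neg A =>
        obtain ⟨a, rfl⟩ := neg_nnf (nnf_of_mem_subc D hD hc)
        simp [nnfNeg] at heq
    | top => simp [nnfNeg] at heq
    | bot => simp [nnfNeg] at heq
    | atom a => simp [nnfNeg] at heq
    | and A B => simp [nnfNeg] at heq
    | or A B => simp [nnfNeg] at heq
    | all R A => simp [nnfNeg] at heq
    | ex R A => simp [nnfNeg] at heq
    | atmost m R A => simp [nnfNeg] at heq
  · cases c with
    | atmost m R A =>
        simp only [nnfNeg, DLConcept.atmost.injEq] at heq
        exact heq.2.2 ▸ subc_atmost hc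
    | neg A =>
        obtain ⟨a, rfl⟩ := neg_nnf (nnf_of_mem_subc D hD hc)
        simp [nnfNeg] at heq
    | top => simp [nnfNeg] at heq
    | bot => simp [nnfNeg] at heq
    | atom a => simp [nnfNeg] at heq
    | and A B => simp [nnfNeg] at heq
    | or A B => simp [nnfNeg] at heq
    | all R A => simp [nnfNeg] at heq
    | ex R A => simp [nnfNeg] at heq
    | atleast m R A => cases m <;> simp [nnfNeg] at heq

end Closure2
end SHIQTerm

namespace SHIQTerm
open DLConcept

/-- Roles that can appear on the left of a role-hierarchy step. -/
def RSet (RIA : List (Role × Role)) : Finset Role :=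
  (RIA.map Prod.fst).toFinset ∪ ((RIA.map Prod.fst).toFinset).image Role.Inv

lemma subrole_mem_RSet {RIA : List (Role × Role)} {R S : Role}
    (h : SubRole RIA R S) (hne : R ≠ S) : R ∈ RSet RIA := by
  rcases (Relation.ReflTransGen.cases_head h) with h' | ⟨c, hrc, _⟩
  · exact absurd h' hne
  · rcases hrc with h1 | h1
    · exact Finset.mem_union_left _ (by
        simp only [List.mem_toFinset, List.mem_map]
        exact ⟨(R, c), h1, rfl⟩)
    · refine Finset.mem_union_right _ ?_
      refine Finset.mem_image.2 ⟨R.Inv, ?_, by simp⟩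
      simp only [List.mem_toFinset, List.mem_map]
      exact ⟨(R.Inv, c.Inv), h1, rfl⟩

/-- `∀`-variants over `RSet` of an `∀`-concept. -/
def allVariants (RIA : List (Role × Role)) : DLConcept → Finset DLConcept
  | .all _ b => (RSet RIA).image (fun R => DLConcept.all R b)
  | _ => ∅

lemma mem_allVariants {RIA : List (Role × Role)} {c x : DLConcept} :
    x ∈ allVariants RIA c ↔
      ∃ S b, c = DLConcept.all S b ∧ ∃ R ∈ RSet RIA, x = DLConcept.all R b := by
  cases c with
  | all S b =>
      simp only [allVariants, Finset.mem_image]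
      constructor
      · rintro ⟨R, hR, rfl⟩; exact ⟨S, b, rfl, R, hR, rfl⟩
      · rintro ⟨S', b', heq, R, hR, rfl⟩
        obtain ⟨rfl, rfl⟩ : S = S' ∧ b = b' := by
          simpa [DLConcept.all.injEq] using heq
        exact ⟨R, hR, rfl⟩
  | top => simp [allVariants]
  | bot => simp [allVariants]
  | atom a => simp [allVariants]
  | neg A => simp [allVariants]
  | and A B => simp [allVariants]
  | or A B => simp [allVariants]
  | ex R A => simp [allVariants]
  | atleast n R A => simp [allVariants]
  | atmost n R A => simp [allVariants]

/-- The finite closure `K` of `D`: all concepts that can ever occur in a node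
label. -/
def K (D : DLConcept) (RIA : List (Role × Role)) : Finset DLConcept :=
  U D ∪ (U D).biUnion (allVariants RIA)

section KClosure
variable {D : DLConcept} {RIA : List (Role × Role)} (hD : D.IsNNF)

lemma K_of_U {C : DLConcept} (h : C ∈ U D) : C ∈ K D RIA :=
  Finset.mem_union_left _ h

lemma K_D : D ∈ K D RIA := K_of_U (mem_U_of_subc (self_mem_subc D))

lemma mem_K_elim {C : DLConcept} (h : C ∈ K D RIA) :
    C ∈ U D ∨ ∃ S b, DLConcept.all S b ∈ U D ∧
      ∃ R ∈ RSet RIA, C = DLConcept.all R b := by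
  rcases Finset.mem_union.1 h with h | h
  · exact Or.inl h
  · rcases Finset.mem_biUnion.1 h with ⟨c, hc, hmem⟩
    rcases mem_allVariants.1 hmem with ⟨S, b, rfl, R, hR, rfl⟩
    exact Or.inr ⟨S, b, hc, R, hR, rfl⟩

include hD

lemma K_and {C₁ C₂ : DLConcept} (h : DLConcept.and C₁ C₂ ∈ K D RIA) :
    C₁ ∈ K D RIA ∧ C₂ ∈ K D RIA := by
  rcases mem_K_elim h with h | ⟨S, b, _, R, _, heq⟩
  · exact ⟨K_of_U (U_and hD h).1, K_of_U (U_and hD h).2⟩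
  · simp at heq

lemma K_or {C₁ C₂ : DLConcept} (h : DLConcept.or C₁ C₂ ∈ K D RIA) :
    C₁ ∈ K D RIA ∧ C₂ ∈ K D RIA := by
  rcases mem_K_elim h with h | ⟨S, b, _, R, _, heq⟩
  · exact ⟨K_of_U (U_or hD h).1, K_of_U (U_or hD h).2⟩
  · simp at heq

lemma K_ex {S : Role} {C : DLConcept} (h : DLConcept.ex S C ∈ K D RIA) :
    C ∈ K D RIA := by
  rcases mem_K_elim h with h | ⟨S', b, _, R, _, heq⟩
  · exact K_of_U (U_ex hD h)
  · simp at heq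

lemma K_all_body {S : Role} {C : DLConcept} (h : DLConcept.all S C ∈ K D RIA) :
    C ∈ K D RIA := by
  rcases mem_K_elim h with h | ⟨S', b, hb, R, _, heq⟩
  · exact K_of_U (U_all hD h)
  · obtain ⟨rfl, rfl⟩ : R = S ∧ b = C := by simpa [DLConcept.all.injEq] using heq.symm
    exact K_of_U (U_all hD hb)

omit hD

lemma K_all_sub {S R : Role} {C : DLConcept} (h : DLConcept.all S C ∈ K D RIA)
    (hsub : SubRole RIA R S) : DLConcept.all R C ∈ K D RIA := by
  rcases eq_or_ne R S with rfl | hne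
  · exact h
  have hR : R ∈ RSet RIA := subrole_mem_RSet hsub hne
  rcases mem_K_elim h with h | ⟨S', b, hb, R', _, heq⟩
  · exact Finset.mem_union_right _ (Finset.mem_biUnion.2
      ⟨_, h, mem_allVariants.2 ⟨_, _, rfl, R, hR, rfl⟩⟩)
  · obtain ⟨rfl, rfl⟩ : R' = S ∧ b = C := by simpa [DLConcept.all.injEq] using heq.symm
    exact Finset.mem_union_right _ (Finset.mem_biUnion.2
      ⟨_, hb, mem_allVariants.2 ⟨_, _, rfl, R, hR, rfl⟩⟩)

include hD

lemma K_atleast {n : ℕ} {S : Role} {C : DLConcept}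
    (h : DLConcept.atleast n S C ∈ K D RIA) :
    C ∈ K D RIA ∧ C.nnfNeg ∈ K D RIA := by
  rcases mem_K_elim h with h | ⟨S', b, _, R, _, heq⟩
  · have hb := U_atleast_body hD h
    exact ⟨K_of_U (mem_U_of_subc hb), K_of_U (mem_U_nn_of_subc hb)⟩
  · simp at heq

lemma K_atmost {n : ℕ} {S : Role} {C : DLConcept}
    (h : DLConcept.atmost n S C ∈ K D RIA) :
    C ∈ K D RIA ∧ C.nnfNeg ∈ K D RIA := by
  rcases mem_K_elim h with h | ⟨S', b, _, R, _, heq⟩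
  · have hb := U_atmost_body hD h
    exact ⟨K_of_U (mem_U_of_subc hb), K_of_U (mem_U_nn_of_subc hb)⟩
  · simp at heq

end KClosure

/-- All roles that can ever occur in an edge label. -/
def ESet (D : DLConcept) (RIA : List (Role × Role)) : Finset Role :=
  ((K D RIA).biUnion DLConcept.rolesOf) ∪
    (((K D RIA).biUnion DLConcept.rolesOf).image Role.Inv)

lemma ESet_inv {D : DLConcept} {RIA : List (Role × Role)} {S : Role}
    (h : S ∈ ESet D RIA) : S.Inv ∈ ESet D RIA := by
  rcases Finset.mem_union.1 h with h | h
  · exact Finset.mem_union_right _ (Finset.mem_image.2 ⟨S, h, rfl⟩)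
  · rcases Finset.mem_image.1 h with ⟨T, hT, rfl⟩
    exact Finset.mem_union_left _ (by simpa using hT)

lemma ESet_ex {D : DLConcept} {RIA : List (Role × Role)} {S : Role}
    {C : DLConcept} (h : DLConcept.ex S C ∈ K D RIA) : S ∈ ESet D RIA :=
  Finset.mem_union_left _ (Finset.mem_biUnion.2 ⟨_, h, by simp [DLConcept.rolesOf]⟩)

lemma ESet_atleast {D : DLConcept} {RIA : List (Role × Role)} {n : ℕ} {S : Role}
    {C : DLConcept} (h : DLConcept.atleast n S C ∈ K D RIA) : S ∈ ESet D RIA :=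
  Finset.mem_union_left _ (Finset.mem_biUnion.2 ⟨_, h, by simp [DLConcept.rolesOf]⟩)

end SHIQTerm

namespace SHIQTerm
open DLConcept

variable {RIA : List (Role × Role)}

/-- The (current) children of a node. -/
def children (t : CTree) (x : ℕ) : Finset ℕ :=
  t.nodes.filter (fun y => y ≠ t.root ∧ t.parent y = x)

lemma mem_children {t : CTree} {x y : ℕ} :
    y ∈ children t x ↔ y ∈ t.nodes ∧ y ≠ t.root ∧ t.parent y = x := by
  simp [children]

lemma succ_iff_children {t : CTree} {x y : ℕ} :
    t.Succ x y ↔ y ∈ children t x := by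
  simp [CTree.Succ, mem_children]

/-- Iterates of the parent map stay inside the tree. -/
lemma iterate_mem {t : CTree} (hpr : t.parent t.root = t.root) {x : ℕ}
    (hx : x ∈ t.nodes) : ∀ k, t.parent^[k] x ∈ t.nodes := by
  intro k
  induction k with
  | zero => simpa using hx
  | succ k ih =>
      rw [Function.iterate_succ_apply']
      rcases eq_or_ne (t.parent^[k] x) t.root with h | h
      · rw [h, hpr]; exact t.root_mem
      · exact t.parent_mem _ ih h

lemma iterate_agree {t : CTree} (hpr : t.parent t.root = t.root)
    {f : ℕ → ℕ} (hf : ∀ z ∈ t.nodes, f z = t.parent z) {x : ℕ}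
    (hx : x ∈ t.nodes) : ∀ k, f^[k] x = t.parent^[k] x := by
  intro k
  induction k with
  | zero => rfl
  | succ k ih =>
      rw [Function.iterate_succ_apply', Function.iterate_succ_apply', ih]
      exact hf _ (iterate_mem hpr hx k)

/-- A neighbour of a node of the tree is a node of the tree. -/
lemma neighb_mem {t : CTree} {S : Role} {x y : ℕ}
    (h : t.RNeighb RIA S x y) (hx : x ∈ t.nodes) : y ∈ t.nodes := by
  rcases h with ⟨⟨hy, _, _⟩, _⟩ | ⟨⟨_, hxr, hpx⟩, _⟩
  · exact hy
  · exact hpx ▸ t.parent_mem _ hx hxr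

/-- No node is its own `R`-neighbour. -/
lemma rneighb_irrefl {t : CTree} {S : Role} {x : ℕ}
    (h : t.RNeighb RIA S x x) : False := by
  have hs : t.Succ x x := by rcases h with ⟨hs, _⟩ | ⟨hs, _⟩ <;> exact hs
  obtain ⟨hx, hxr, hp⟩ := hs
  obtain ⟨k, hk⟩ := t.reach x hx
  rw [Function.iterate_fixed hp] at hk
  exact hxr hk

lemma anc_of_parent {t : CTree} {x z : ℕ} (hx : x ∈ t.nodes) (hxr : x ≠ t.root)
    (hp : t.parent x = z) : t.Anc z x := by
  refine ⟨hx, 1, one_pos, by simpa using hp, ?_⟩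
  intro j hj
  interval_cases j
  simpa using hxr

/-- An ancestor of `x` is never a successor of `x` (the tree is acyclic). -/
lemma not_succ_of_anc {t : CTree} {x z : ℕ} (ha : t.Anc z x) (hs : t.Succ x z) :
    False := by
  obtain ⟨hx, k, hkpos, hk, hroot⟩ := ha
  obtain ⟨hz, hzr, hpz⟩ := hs
  have hcyc : t.parent^[k + 1] x = x := by
    rw [Function.iterate_succ_apply', hk, hpz]
  have hper : ∀ m, t.parent^[m * (k + 1)] x = x := by
    intro m
    induction m with
    | zero => simp
    | succ m ih =>
        have : (m + 1) * (k + 1) = (k + 1) + m * (k + 1) := by ring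
        rw [this, Function.iterate_add_apply, ih, hcyc]
  have hnz : ∀ m, t.parent^[m] x ≠ t.root := by
    intro m
    have hdecomp : m = m % (k + 1) + m / (k + 1) * (k + 1) := by
      rw [Nat.mod_add_div']
    rw [hdecomp, Function.iterate_add_apply, hper]
    have hlt : m % (k + 1) < k + 1 := Nat.mod_lt _ (Nat.succ_pos k)
    rcases Nat.lt_succ_iff_lt_or_eq.1 hlt with h | h
    · exact hroot _ h
    · rw [h, hk]; exact hzr
  obtain ⟨m, hm⟩ := t.reach x hx
  exact hnz m hm

/-- Extraction lemma: a neighbour which is not an ancestor is a successor. -/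
lemma succ_of_neighb {t : CTree} {S : Role} {x y : ℕ}
    (h : t.RNeighb RIA S x y) (hanc : ¬ t.Anc y x) :
    t.Succ x y ∧ ∃ S' ∈ t.elb y, SubRole RIA S' S := by
  rcases h with ⟨hs, hw⟩ | ⟨⟨hx, hxr, hpx⟩, _⟩
  · exact ⟨hs, hw⟩
  · exact absurd (anc_of_parent hx hxr hpx) hanc

/-- Extraction lemma: a neighbour which is an ancestor is the parent. -/
lemma parent_of_neighb_anc {t : CTree} {S : Role} {x z : ℕ}
    (h : t.RNeighb RIA S x z) (hanc : t.Anc z x) :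
    t.Succ z x ∧ ∃ S' ∈ t.elb x, SubRole RIA S' S.Inv := by
  rcases h with ⟨hs, _⟩ | ⟨hs, hw⟩
  · exact absurd hs (not_succ_of_anc hanc)
  · exact ⟨hs, hw⟩

lemma emptyedge_blocked {t : CTree} {x : ℕ} (h : t.EmptyEdge x) : t.Blocked x :=
  ⟨x, Or.inl rfl, Or.inr h⟩

lemma emptyedge_iblocked {t : CTree} {x : ℕ} (h : t.EmptyEdge x) :
    t.IndirectlyBlocked x := Or.inr h

lemma anc_ne_root {t : CTree} {x z : ℕ} (h : t.Anc z x) : x ≠ t.root := by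
  obtain ⟨_, k, hkpos, _, hroot⟩ := h
  simpa using hroot 0 hkpos

end SHIQTerm

namespace SHIQTerm
open DLConcept

/-- Weight of a generating concept. -/
def w : DLConcept → ℕ
  | .ex _ _ => 1
  | .atleast n _ _ => n
  | _ => 0

/-- A generating concept has been satisfied at `x`. -/
def Fired (RIA : List (Role × Role)) (t : CTree) (x : ℕ) : DLConcept → Prop
  | .ex S C => ∃ z, t.RNeighb RIA S x z ∧ C ∈ t.lab z
  | .atleast n S C => ∃ zs : Fin n → ℕ,
      (∀ i, t.RNeighb RIA S x (zs i) ∧ C ∈ t.lab (zs i)) ∧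
      ∀ i j, i ≠ j → t.neq (zs i) (zs j)
  | _ => False

def FiredE (RIA : List (Role × Role)) (t : CTree) (x : ℕ) (c : DLConcept) : Prop :=
  Fired RIA t x c ∨ t.EmptyEdge x

open Classical in
/-- The generating potential of a node. -/
noncomputable def potSum (D : DLConcept) (RIA : List (Role × Role)) (t : CTree)
    (x : ℕ) : ℕ :=
  ∑ c ∈ (K D RIA).filter (fun c => FiredE RIA t x c), w c

/-- The depth bound coming from pair-wise blocking. -/
def Bdep (D : DLConcept) (RIA : List (Role × Role)) : ℕ :=
  ((((K D RIA).powerset ×ˢ (K D RIA).powerset)) ×ˢ (ESet D RIA).powerset).card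

def cmax (D : DLConcept) (RIA : List (Role × Role)) : ℕ := ∑ c ∈ K D RIA, w c

def Nmax (D : DLConcept) (RIA : List (Role × Role)) : ℕ :=
  ∑ d ∈ Finset.range (Bdep D RIA + 2), (cmax D RIA) ^ d

/-- The global invariant maintained by the expansion rules. -/
structure GoodT (RIA : List (Role × Role)) (D : DLConcept) (t : CTree) : Prop where
  lab_sub : ∀ x, t.lab x ⊆ K D RIA
  elb_sub : ∀ x, t.elb x ⊆ ESet D RIA
  proot : t.parent t.root = t.root
  depth_le : ∀ x ∈ t.nodes, ∃ k ≤ Bdep D RIA + 1, t.parent^[k] x = t.root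
  nirr : ∀ x, ¬ t.neq x x
  child_bound : ∀ x ∈ t.nodes, (children t x).card ≤ potSum D RIA t x

lemma potSum_le_cmax (D : DLConcept) (RIA : List (Role × Role)) (t : CTree)
    (x : ℕ) : potSum D RIA t x ≤ cmax D RIA := by
  classical
  exact Finset.sum_le_sum_of_subset (Finset.filter_subset _ _)

section Depth
variable {RIA : List (Role × Role)} {D : DLConcept} {t : CTree}

lemma depth_root_eq (t : CTree) : t.depth t.root = 0 :=
  Nat.sInf_eq_zero.2 (Or.inl (by simp [Set.mem_setOf_eq]))

lemma depth_spec {x : ℕ} (hx : x ∈ t.nodes) :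
    t.parent^[t.depth x] x = t.root := by
  obtain ⟨k, hk⟩ := t.reach x hx
  have h : t.depth x ∈ {k | t.parent^[k] x = t.root} :=
    Nat.sInf_mem (⟨k, hk⟩ : Set.Nonempty {k | t.parent^[k] x = t.root})
  exact h

lemma depth_min {x j : ℕ} (hj : j < t.depth x) : t.parent^[j] x ≠ t.root := by
  have h : j ∉ {k | t.parent^[k] x = t.root} := Nat.notMem_of_lt_sInf hj
  simpa [Set.mem_setOf_eq] using h

lemma blocked_of_pair (hpr : t.parent t.root = t.root)
    {x a b : ℕ} (hx : x ∈ t.nodes) (hab : a < b) (hbd : b < t.depth x)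
    (h1 : t.lab (t.parent^[a] x) = t.lab (t.parent^[b] x))
    (h2 : t.lab (t.parent^[a+1] x) = t.lab (t.parent^[b+1] x))
    (h3 : t.elb (t.parent^[a] x) = t.elb (t.parent^[b] x)) :
    t.Blocked x := by
  set u : ℕ → ℕ := fun j => t.parent^[j] x with hu
  have humem : ∀ j, u j ∈ t.nodes := fun j => iterate_mem hpr hx j
  have hanc : ∀ j j', j < j' → j' ≤ t.depth x → t.Anc (u j') (u j) := by
    intro j j' hjj hj'
    refine ⟨humem j, j' - j, by omega, ?_, ?_⟩
    · show t.parent^[j' - j] (t.parent^[j] x) = u j'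
      rw [← Function.iterate_add_apply]
      congr 1
      omega
    · intro i hi
      show t.parent^[i] (t.parent^[j] x) ≠ t.root
      rw [← Function.iterate_add_apply]
      exact depth_min (by omega)
  have hup : ∀ j, t.parent (u j) = u (j + 1) := by
    intro j
    exact (Function.iterate_succ_apply' t.parent j x).symm
  have hcand : t.Cand (u a) := by
    refine ⟨humem a, depth_min (by omega), u b, hanc a b hab (by omega),
      depth_min hbd, ?_, h1, ?_, h3⟩
    · rw [hup b]
      exact hanc a (b + 1) (by omega) (by omega)
    · rw [hup a, hup b]
      exact h2
  refine ⟨u a, ?_, Or.inl hcand⟩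
  rcases Nat.eq_zero_or_pos a with rfl | hpos
  · exact Or.inl (by simp [hu])
  · refine Or.inr ?_
    have := hanc 0 a hpos (by omega)
    simpa [hu] using this

/-- Deep unblocked nodes do not exist: pair-wise blocking kicks in by depth
`Bdep`. -/
lemma blocked_of_deep (hl : ∀ x, t.lab x ⊆ K D RIA)
    (he : ∀ x, t.elb x ⊆ ESet D RIA) (hpr : t.parent t.root = t.root)
    {x : ℕ} (hx : x ∈ t.nodes) (hdeep : Bdep D RIA < t.depth x) :
    t.Blocked x := by
  have hmaps : ∀ j ∈ Finset.range (t.depth x),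
      ((t.lab (t.parent^[j] x), t.lab (t.parent^[j+1] x)), t.elb (t.parent^[j] x)) ∈
        (((K D RIA).powerset ×ˢ (K D RIA).powerset)) ×ˢ (ESet D RIA).powerset := by
    intro j _
    refine Finset.mem_product.2 ⟨Finset.mem_product.2 ⟨?_, ?_⟩, ?_⟩
    · exact Finset.mem_powerset.2 (hl _)
    · exact Finset.mem_powerset.2 (hl _)
    · exact Finset.mem_powerset.2 (he _)
  obtain ⟨a, ha, b, hb, hab, heq⟩ :=
    Finset.exists_ne_map_eq_of_card_lt_of_maps_to
      (by simpa [Bdep] using hdeep) hmaps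
  rw [Finset.mem_range] at ha hb
  have e1 := congrArg (fun p => p.1.1) heq
  have e2 := congrArg (fun p => p.1.2) heq
  have e3 := congrArg (fun p => p.2) heq
  simp only at e1 e2 e3
  rcases hab.lt_or_gt with hlt | hlt
  · exact blocked_of_pair hpr hx hlt hb e1 e2 e3
  · exact blocked_of_pair hpr hx hlt ha e1.symm e2.symm e3.symm

/-- An unblocked node is at depth at most `Bdep`. -/
lemma depth_le_of_not_blocked (hG : GoodT RIA D t) {x : ℕ} (hx : x ∈ t.nodes)
    (hnb : ¬ t.Blocked x) : t.depth x ≤ Bdep D RIA := by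
  by_contra h
  exact hnb (blocked_of_deep hG.lab_sub hG.elb_sub hG.proot hx (by omega))

/-- The number of nodes of a tree satisfying the invariant is bounded. -/
lemma card_nodes_le (hG : GoodT RIA D t) : t.nodes.card ≤ Nmax D RIA := by
  classical
  set lvl : ℕ → Finset ℕ := fun d => t.nodes.filter (fun y => t.depth y = d) with hlvl
  have hlvl0 : lvl 0 ⊆ {t.root} := by
    intro y hy
    rw [hlvl] at hy
    simp only [Finset.mem_filter] at hy
    have := depth_spec (t := t) hy.1
    rw [hy.2] at this
    simpa using this
  have hstep : ∀ d, lvl (d + 1) ⊆ (lvl d).biUnion (children t) := by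
    intro d y hy
    rw [hlvl] at hy
    simp only [Finset.mem_filter] at hy
    obtain ⟨hyn, hyd⟩ := hy
    have hyr : y ≠ t.root := by
      intro h
      rw [h, depth_root_eq] at hyd
      omega
    have hpn : t.parent y ∈ t.nodes := t.parent_mem _ hyn hyr
    have hdp : t.depth (t.parent y) = d := by
      have hh : t.parent^[d + 1] y = t.root := by
        rw [← hyd]; exact depth_spec hyn
      have hle : t.depth (t.parent y) ≤ d := by
        refine Nat.sInf_le ?_
        show t.parent^[d] (t.parent y) = t.root
        rw [← Function.iterate_succ_apply]
        exact hh
      have hge : d ≤ t.depth (t.parent y) := by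
        by_contra h
        have h2 : t.parent^[t.depth (t.parent y)] (t.parent y) = t.root :=
          depth_spec hpn
        have h3 : t.parent^[t.depth (t.parent y) + 1] y = t.root := by
          rw [Function.iterate_succ_apply]
          exact h2
        have h4 : t.depth y ≤ t.depth (t.parent y) + 1 := Nat.sInf_le h3
        rw [hyd] at h4
        omega
      omega
    refine Finset.mem_biUnion.2 ⟨t.parent y, ?_, ?_⟩
    · rw [hlvl]; exact Finset.mem_filter.2 ⟨hpn, hdp⟩
    · exact mem_children.2 ⟨hyn, hyr, rfl⟩
  have hcard : ∀ d, (lvl d).card ≤ (cmax D RIA) ^ d := by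
    intro d
    induction d with
    | zero => simpa using Finset.card_le_card hlvl0
    | succ d ih =>
        calc (lvl (d + 1)).card ≤ ((lvl d).biUnion (children t)).card :=
              Finset.card_le_card (hstep d)
          _ ≤ ∑ p ∈ lvl d, (children t p).card := Finset.card_biUnion_le
          _ ≤ ∑ p ∈ lvl d, cmax D RIA := by
              refine Finset.sum_le_sum ?_
              intro p hp
              rw [hlvl] at hp
              exact (hG.child_bound p (Finset.mem_filter.1 hp).1).trans
                (potSum_le_cmax D RIA t p)
          _ = (lvl d).card * cmax D RIA := by rw [Finset.sum_const, smul_eq_mul]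
          _ ≤ (cmax D RIA) ^ d * cmax D RIA := by
              exact Nat.mul_le_mul_right _ ih
          _ = (cmax D RIA) ^ (d + 1) := by ring
  have hsub : t.nodes ⊆ (Finset.range (Bdep D RIA + 2)).biUnion lvl := by
    intro y hy
    obtain ⟨k, hk, hkr⟩ := hG.depth_le y hy
    have : t.depth y ≤ Bdep D RIA + 1 := le_trans (Nat.sInf_le hkr) hk
    exact Finset.mem_biUnion.2 ⟨t.depth y, Finset.mem_range.2 (by omega),
      Finset.mem_filter.2 ⟨hy, rfl⟩⟩
  calc t.nodes.card ≤ ((Finset.range (Bdep D RIA + 2)).biUnion lvl).card :=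
        Finset.card_le_card hsub
    _ ≤ ∑ d ∈ Finset.range (Bdep D RIA + 2), (lvl d).card := Finset.card_biUnion_le
    _ ≤ Nmax D RIA := Finset.sum_le_sum (fun d _ => hcard d)

end Depth
end SHIQTerm

namespace SHIQTerm
open DLConcept

variable {RIA : List (Role × Role)}

lemma succ_ne {t : CTree} {x y : ℕ} (h : t.Succ x y) : x ≠ y := by
  rintro rfl
  obtain ⟨h1, h2, h3⟩ := h
  obtain ⟨k, hk⟩ := t.reach x h1
  rw [Function.iterate_fixed h3] at hk
  exact h2 hk

lemma succ_eqstruct {t t' : CTree} (hn : t'.nodes = t.nodes)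
    (hr : t'.root = t.root) (hp : t'.parent = t.parent) {a b : ℕ}
    (h : t.Succ a b) : t'.Succ a b := by
  obtain ⟨h1, h2, h3⟩ := h
  exact ⟨by rw [hn]; exact h1, by rw [hr]; exact h2, by rw [hp]; exact h3⟩

lemma rneighb_mono {t t' : CTree}
    (hn : t.nodes ⊆ t'.nodes) (hr : t'.root = t.root)
    (hp : ∀ z ∈ t.nodes, t'.parent z = t.parent z)
    (he : ∀ z ∈ t.nodes, t.elb z ⊆ t'.elb z)
    {S : Role} {x y : ℕ} (hx : x ∈ t.nodes) (h : t.RNeighb RIA S x y) :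
    t'.RNeighb RIA S x y := by
  have hy := neighb_mem h hx
  rcases h with ⟨⟨h1, h2, h3⟩, S', hS', hsub⟩ | ⟨⟨h1, h2, h3⟩, S', hS', hsub⟩
  · exact Or.inl ⟨⟨hn hy, by rw [hr]; exact h2, by rw [hp y hy]; exact h3⟩,
      S', he y hy hS', hsub⟩
  · exact Or.inr ⟨⟨hn hx, by rw [hr]; exact h2, by rw [hp x hx]; exact h3⟩,
      S', he x hx hS', hsub⟩

/-- Persistence of satisfied generating concepts under monotone steps. -/
lemma firedE_mono {t t' : CTree}
    (hn : t.nodes ⊆ t'.nodes) (hr : t'.root = t.root)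
    (hp : ∀ z ∈ t.nodes, t'.parent z = t.parent z)
    (heq : ∀ z ∈ t.nodes, t'.elb z = t.elb z)
    (hl : ∀ z ∈ t.nodes, t.lab z ⊆ t'.lab z)
    (hq : ∀ u v, t.neq u v → t'.neq u v)
    {x : ℕ} {c : DLConcept} (hx : x ∈ t.nodes) (h : FiredE RIA t x c) :
    FiredE RIA t' x c := by
  have he : ∀ z ∈ t.nodes, t.elb z ⊆ t'.elb z := by
    intro z hz
    rw [heq z hz]
  rcases h with h | h
  · left
    cases c with
    | ex S C =>
        obtain ⟨z, hz, hC⟩ := h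
        exact ⟨z, rneighb_mono hn hr hp he hx hz, hl _ (neighb_mem hz hx) hC⟩
    | atleast n S C =>
        obtain ⟨zs, hzs, hneq⟩ := h
        exact ⟨zs, fun i => ⟨rneighb_mono hn hr hp he hx (hzs i).1,
          hl _ (neighb_mem (hzs i).1 hx) (hzs i).2⟩,
          fun i j hij => hq _ _ (hneq i j hij)⟩
    | top => exact h
    | bot => exact h
    | atom a => exact h
    | neg A => exact h
    | and A B => exact h
    | or A B => exact h
    | all S C => exact h
    | atmost n S C => exact h
  · exact Or.inr ⟨hn h.1, by rw [hr]; exact h.2.1, by rw [heq x hx]; exact h.2.2⟩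

/-- Persistence of satisfied generating concepts under a merge (≤-rule) step:
`y` is merged into `z`, both being neighbours of `x`. -/
lemma firedE_merge {t t' : CTree} {x y z : ℕ}
    (hn : t'.nodes = t.nodes) (hr : t'.root = t.root) (hp : t'.parent = t.parent)
    (hl : ∀ w, t.lab w ⊆ t'.lab w)
    (hlyz : t.lab y ⊆ t'.lab z)
    (he : ∀ w, w ≠ y → t.elb w ⊆ t'.elb w)
    (hez : ∀ w, w ≠ y → t.elb w = ∅ → t'.elb w = ∅)
    (hey : t'.elb y = ∅)
    (hyx : t.Succ x y)
    (hnew : ∀ S₀ : Role, (∃ S' ∈ t.elb y, SubRole RIA S' S₀) →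
      t'.RNeighb RIA S₀ x z)
    (hq : ∀ u v, t'.neq u v ↔
      (t.neq u v ∨ (t.neq u y ∧ v = z) ∨ (u = z ∧ t.neq v y)))
    (hnq : ¬ t.neq y z)
    (hirr : ∀ u, ¬ t.neq u u)
    {x₀ : ℕ} {c : DLConcept} (hx₀ : x₀ ∈ t.nodes) (h : FiredE RIA t x₀ c) :
    FiredE RIA t' x₀ c := by
  have hxy : x ≠ y := succ_ne hyx
  have hpy : t.parent y = x := hyx.2.2
  -- if `x₀ = y` then `x₀` has an empty incoming edge in `t'`
  by_cases hx₀y : x₀ = y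
  · subst hx₀y
    exact Or.inr ⟨by rw [hn]; exact hyx.1, by rw [hr]; exact hyx.2.1, hey⟩
  -- transfer of a single neighbour-witness
  have htrans : ∀ (S₀ : Role) (wt : ℕ), wt ≠ y → t.RNeighb RIA S₀ x₀ wt →
      t'.RNeighb RIA S₀ x₀ wt := by
    intro S₀ wt hwty hw
    rcases hw with ⟨hs, S', hS', hsub⟩ | ⟨hs, S', hS', hsub⟩
    · exact Or.inl ⟨succ_eqstruct hn hr hp hs, S', he wt hwty hS', hsub⟩
    · exact Or.inr ⟨succ_eqstruct hn hr hp hs, S', he x₀ hx₀y hS', hsub⟩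
  -- the `y`-witness survives or is replaced
  have hywit : ∀ (S₀ : Role), t.RNeighb RIA S₀ x₀ y →
      (x₀ = x ∧ t'.RNeighb RIA S₀ x z) ∨ t'.RNeighb RIA S₀ x₀ y := by
    intro S₀ hw
    rcases hw with ⟨hs, S', hS', hsub⟩ | ⟨hs, S', hS', hsub⟩
    · -- y is a successor of x₀, so x₀ = x
      have : x₀ = x := by rw [← hs.2.2, hpy]
      exact Or.inl ⟨this, hnew S₀ ⟨S', hS', hsub⟩⟩
    · -- x₀ is a successor of y
      exact Or.inr (Or.inr ⟨succ_eqstruct hn hr hp hs, S', he x₀ hx₀y hS', hsub⟩)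
  rcases h with h | h
  · left
    cases c with
    | ex S C =>
        obtain ⟨wt, hw, hC⟩ := h
        by_cases hwy : wt = y
        · subst hwy
          rcases hywit S hw with ⟨rfl, hw'⟩ | hw'
          · exact ⟨z, hw', hlyz hC⟩
          · exact ⟨wt, hw', hl _ hC⟩
        · exact ⟨wt, htrans S wt hwy hw, hl _ hC⟩
    | atleast n S C =>
        obtain ⟨zs, hzs, hneq⟩ := h
        by_cases hxx : x₀ = x
        · subst hxx
          refine ⟨fun i => if zs i = y then z else zs i, ?_, ?_⟩
          · intro i
            by_cases hiy : zs i = y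
            · simp only [hiy, if_pos]
              have hwy := (hzs i).1
              rw [hiy] at hwy
              rcases hwy with (⟨hs, S', hS', hsub⟩ | ⟨hs, _⟩)
              · exact ⟨hnew S ⟨S', hS', hsub⟩, hlyz (hiy ▸ (hzs i).2)⟩
              · exact absurd hs
                  (fun hs => not_succ_of_anc (anc_of_parent hyx.1 hyx.2.1 hpy) hs)
            · simp only [hiy, if_neg, if_false]
              exact ⟨htrans S (zs i) hiy (hzs i).1, hl _ (hzs i).2⟩
          · intro i j hij
            by_cases hiy : zs i = y <;> by_cases hjy : zs j = y
            · have hh := hneq i j hij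
              rw [hiy, hjy] at hh
              exact absurd hh (hirr y)
            · simp only [hiy, hjy, if_pos, if_neg, if_false]
              have hh := hneq i j hij
              rw [hiy] at hh
              exact (hq _ _).2 (Or.inr (Or.inr ⟨rfl, t.neq_symm _ _ hh⟩))
            · simp only [hiy, hjy, if_pos, if_neg, if_false]
              have hh := hneq i j hij
              rw [hjy] at hh
              exact (hq _ _).2 (Or.inr (Or.inl ⟨hh, rfl⟩))
            · simp only [hiy, hjy, if_neg, if_false]
              exact (hq _ _).2 (Or.inl (hneq i j hij))
        · -- x₀ ≠ x : all witnesses survive unchanged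
          refine ⟨zs, ?_, fun i j hij => (hq _ _).2 (Or.inl (hneq i j hij))⟩
          intro i
          by_cases hiy : zs i = y
          · rcases hywit S (hiy ▸ (hzs i).1) with ⟨hxx', _⟩ | hw'
            · exact absurd hxx' hxx
            · exact ⟨hiy ▸ hw', hl _ (hzs i).2⟩
          · exact ⟨htrans S (zs i) hiy (hzs i).1, hl _ (hzs i).2⟩
    | top => exact h
    | bot => exact h
    | atom a => exact h
    | neg A => exact h
    | and A B => exact h
    | or A B => exact h
    | all S C => exact h
    | atmost n S C => exact h
  · exact Or.inr ⟨by rw [hn]; exact h.1, by rw [hr]; exact h.2.1,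
      hez x₀ hx₀y h.2.2⟩

end SHIQTerm

namespace SHIQTerm
open DLConcept

variable {Rp : Set ℕ} {RIA : List (Role × Role)} {D : DLConcept}

lemma potSum_mono_of_firedE {t t' : CTree} {x : ℕ}
    (h : ∀ c, FiredE RIA t x c → FiredE RIA t' x c) :
    potSum D RIA t x ≤ potSum D RIA t' x := by
  classical
  unfold potSum
  apply Finset.sum_le_sum_of_subset
  intro c hc
  rw [Finset.mem_filter] at hc ⊢
  exact ⟨hc.1, h c hc.2⟩

lemma children_congr {t t' : CTree} (hn : t'.nodes = t.nodes)
    (hr : t'.root = t.root) (hp : t'.parent = t.parent) (x : ℕ) :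
    children t' x = children t x := by
  unfold children
  rw [hn, hr, hp]

/-- Invariant preservation for steps that only extend a node label. -/
lemma good_label_step {t : CTree} (hG : GoodT RIA D t) (t' : CTree)
    (hn : t'.nodes = t.nodes) (hr : t'.root = t.root) (hp : t'.parent = t.parent)
    (he : t'.elb = t.elb) (hq : t'.neq = t.neq)
    (hlab : ∀ x, t.lab x ⊆ t'.lab x) (hlabK : ∀ x, t'.lab x ⊆ K D RIA) :
    GoodT RIA D t' := by
  refine ⟨hlabK, by rw [he]; exact hG.elb_sub, ?_, ?_, by rw [hq]; exact hG.nirr, ?_⟩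
  · rw [hp, hr]; exact hG.proot
  · rw [hn, hp, hr]; exact hG.depth_le
  · intro x hx
    rw [hn] at hx
    rw [children_congr hn hr hp]
    refine (hG.child_bound x hx).trans (potSum_mono_of_firedE ?_)
    intro c hc
    refine firedE_mono (by rw [hn]) hr (by rw [hp]; exact fun _ _ => rfl)
      (by rw [he]; exact fun _ _ => rfl) (fun z _ => hlab z)
      (by rw [hq]; exact fun _ _ h => h) hx hc

lemma update_lab_subset {lab : ℕ → Finset DLConcept} {x : ℕ}
    {s : Finset DLConcept} (hs : lab x ⊆ s) (z : ℕ) :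
    lab z ⊆ Function.update lab x s z := by
  rcases eq_or_ne z x with rfl | h
  · rw [Function.update_self]; exact hs
  · rw [Function.update_of_ne h]

lemma update_lab_K {lab : ℕ → Finset DLConcept} {x : ℕ}
    {s : Finset DLConcept} (hK : ∀ z, lab z ⊆ K D RIA) (hs : s ⊆ K D RIA)
    (z : ℕ) : Function.update lab x s z ⊆ K D RIA := by
  rcases eq_or_ne z x with rfl | h
  · rw [Function.update_self]; exact hs
  · rw [Function.update_of_ne h]; exact hK z

end SHIQTerm

namespace SHIQTerm
open DLConcept

variable {Rp : Set ℕ} {RIA : List (Role × Role)} {D : DLConcept}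

/-- Invariant preservation for merge (≤-rule) steps. -/
lemma good_merge {t t' : CTree} (hG : GoodT RIA D t) {x y z : ℕ}
    (hn : t'.nodes = t.nodes) (hr : t'.root = t.root) (hp : t'.parent = t.parent)
    (hl : ∀ w, t.lab w ⊆ t'.lab w) (hlK : ∀ w, t'.lab w ⊆ K D RIA)
    (heK : ∀ w, t'.elb w ⊆ ESet D RIA)
    (hlyz : t.lab y ⊆ t'.lab z)
    (he : ∀ w, w ≠ y → t.elb w ⊆ t'.elb w)
    (hez : ∀ w, w ≠ y → t.elb w = ∅ → t'.elb w = ∅)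
    (hey : t'.elb y = ∅)
    (hyx : t.Succ x y)
    (hnew : ∀ S₀ : Role, (∃ S' ∈ t.elb y, SubRole RIA S' S₀) →
      t'.RNeighb RIA S₀ x z)
    (hq : ∀ u v, t'.neq u v ↔
      (t.neq u v ∨ (t.neq u y ∧ v = z) ∨ (u = z ∧ t.neq v y)))
    (hnq : ¬ t.neq y z) : GoodT RIA D t' := by
  refine ⟨hlK, heK, ?_, ?_, ?_, ?_⟩
  · rw [hp, hr]; exact hG.proot
  · rw [hn, hp, hr]; exact hG.depth_le
  · intro u hu
    rcases (hq u u).1 hu with h | ⟨h1, h2⟩ | ⟨h1, h2⟩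
    · exact hG.nirr u h
    · subst h2; exact hnq (t.neq_symm _ _ h1)
    · subst h1; exact hnq (t.neq_symm _ _ h2)
  · intro w hw
    rw [hn] at hw
    rw [children_congr hn hr hp]
    refine (hG.child_bound w hw).trans (potSum_mono_of_firedE ?_)
    intro c hc
    exact firedE_merge hn hr hp hl hlyz he hez hey hyx hnew hq hnq hG.nirr hw hc

end SHIQTerm

namespace SHIQTerm
open DLConcept

variable {Rp : Set ℕ} {RIA : List (Role × Role)} {D : DLConcept}

theorem step_good (hD : D.IsNNF) {t t' : CTree} (hG : GoodT RIA D t)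
    (hst : Step Rp RIA t t') : GoodT RIA D t' := by
  cases hst with
  | conj x C₁ C₂ hx hC hnib hnew hn hr hp hl he hq =>
      have hK : DLConcept.and C₁ C₂ ∈ K D RIA := hG.lab_sub x hC
      refine good_label_step hG t' hn hr hp he hq ?_ ?_
      · intro z; rw [hl]; exact update_lab_subset Finset.subset_union_left z
      · intro z; rw [hl]
        refine update_lab_K hG.lab_sub ?_ z
        refine Finset.union_subset (hG.lab_sub x) ?_
        intro c hc
        rcases Finset.mem_insert.1 hc with rfl | hc
        · exact (K_and hD hK).1
        · rw [Finset.mem_singleton.1 hc]; exact (K_and hD hK).2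
  | disj x C₁ C₂ E hx hC hnib hnew hE hn hr hp hl he hq =>
      have hK : DLConcept.or C₁ C₂ ∈ K D RIA := hG.lab_sub x hC
      refine good_label_step hG t' hn hr hp he hq ?_ ?_
      · intro z; rw [hl]; exact update_lab_subset (Finset.subset_insert _ _) z
      · intro z; rw [hl]
        refine update_lab_K hG.lab_sub ?_ z
        refine Finset.insert_subset ?_ (hG.lab_sub x)
        rcases hE with rfl | rfl
        · exact (K_or hD hK).1
        · exact (K_or hD hK).2
  | all x y S C hx hC hnib hng hnew hn hr hp hl he hq =>
      have hK : DLConcept.all S C ∈ K D RIA := hG.lab_sub x hC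
      refine good_label_step hG t' hn hr hp he hq ?_ ?_
      · intro z; rw [hl]; exact update_lab_subset (Finset.subset_insert _ _) z
      · intro z; rw [hl]
        exact update_lab_K hG.lab_sub
          (Finset.insert_subset (K_all_body hD hK) (hG.lab_sub y)) z
  | allTrans x y R S C hx hC hnib htr hsub hng hnew hn hr hp hl he hq =>
      have hK : DLConcept.all S C ∈ K D RIA := hG.lab_sub x hC
      refine good_label_step hG t' hn hr hp he hq ?_ ?_
      · intro z; rw [hl]; exact update_lab_subset (Finset.subset_insert _ _) z
      · intro z; rw [hl]
        exact update_lab_K hG.lab_sub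
          (Finset.insert_subset (K_all_sub hK hsub) (hG.lab_sub y)) z
  | choose x y n S C E hx hC hnib hng hnew hE hn hr hp hl he hq =>
      have hK : C ∈ K D RIA ∧ C.nnfNeg ∈ K D RIA := by
        rcases hC with hC | hC
        · exact K_atleast hD (hG.lab_sub x hC)
        · exact K_atmost hD (hG.lab_sub x hC)
      refine good_label_step hG t' hn hr hp he hq ?_ ?_
      · intro z; rw [hl]; exact update_lab_subset (Finset.subset_insert _ _) z
      · intro z; rw [hl]
        refine update_lab_K hG.lab_sub
          (Finset.insert_subset ?_ (hG.lab_sub y)) z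
        rcases hE with rfl | rfl
        · exact hK.1
        · exact hK.2
  | exists_ x y S C hx hC hnb hnew hy hn hr hp hl he hq =>
      have hxy : x ≠ y := fun h => hy (h ▸ hx)
      have hyr : y ≠ t.root := fun h => hy (h ▸ t.root_mem)
      have hpag : ∀ w ∈ t.nodes, t'.parent w = t.parent w := by
        intro w hw
        rw [hp]
        exact Function.update_of_ne (show w ≠ y from fun h => hy (h ▸ hw)) _ _
      have hlag : ∀ w ∈ t.nodes, t'.lab w = t.lab w := by
        intro w hw
        rw [hl]
        exact Function.update_of_ne (show w ≠ y from fun h => hy (h ▸ hw)) _ _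
      have heag : ∀ w ∈ t.nodes, t'.elb w = t.elb w := by
        intro w hw
        rw [he]
        exact Function.update_of_ne (show w ≠ y from fun h => hy (h ▸ hw)) _ _
      have hsubn : t.nodes ⊆ t'.nodes := by rw [hn]; exact Finset.subset_insert _ _
      have hpy : t'.parent y = x := by rw [hp]; exact Function.update_self _ _ _
      have hmono : ∀ w ∈ t.nodes, ∀ c, FiredE RIA t w c → FiredE RIA t' w c := by
        intro w hw c hc
        exact firedE_mono hsubn hr hpag heag
          (fun u hu => by rw [hlag u hu]) (by rw [hq]; exact fun _ _ h => h) hw hc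
      refine ⟨?_, ?_, ?_, ?_, ?_, ?_⟩
      · intro w
        rw [hl]
        refine update_lab_K hG.lab_sub ?_ w
        simpa using K_ex hD (hG.lab_sub x hC)
      · intro w
        rcases eq_or_ne w y with rfl | hwy
        · rw [he, Function.update_self]
          simpa using ESet_ex (hG.lab_sub x hC)
        · rw [he, Function.update_of_ne hwy]
          exact hG.elb_sub w
      · rw [hr, hpag _ t.root_mem]; exact hG.proot
      · intro w hw
        rw [hn] at hw
        rcases Finset.mem_insert.1 hw with rfl | hw
        · refine ⟨t.depth x + 1, ?_, ?_⟩
          · have := depth_le_of_not_blocked hG hx hnb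
            omega
          · rw [hr, Function.iterate_succ_apply, hpy,
              iterate_agree hG.proot hpag hx]
            exact depth_spec hx
        · obtain ⟨k, hk, hkr⟩ := hG.depth_le w hw
          exact ⟨k, hk, by rw [hr, iterate_agree hG.proot hpag hw]; exact hkr⟩
      · rw [hq]; exact hG.nirr
      · intro w hw
        rw [hn] at hw
        rcases Finset.mem_insert.1 hw with rfl | hw
        · have hempty : children t' w = ∅ := by
            rw [Finset.eq_empty_iff_forall_notMem]
            intro u hu
            obtain ⟨hu1, hu2, hu3⟩ := mem_children.1 hu
            rw [hn] at hu1
            rcases Finset.mem_insert.1 hu1 with rfl | hu1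
            · rw [hpy] at hu3; exact hy (hu3 ▸ hx)
            · rw [hpag u hu1] at hu3
              have := t.parent_mem u hu1 (by rw [hr] at hu2; exact hu2)
              rw [hu3] at this
              exact hy this
          rw [hempty]
          simp
        by_cases hwx : w = x
        · subst hwx
          have hch : children t' w = insert y (children t w) := by
            ext u
            rw [mem_children, Finset.mem_insert, mem_children, hn, hr]
            constructor
            · rintro ⟨hu1, hu2, hu3⟩
              rcases Finset.mem_insert.1 hu1 with rfl | hu1
              · exact Or.inl rfl
              · rw [hpag u hu1] at hu3
                exact Or.inr ⟨hu1, hu2, hu3⟩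
            · rintro (rfl | ⟨hu1, hu2, hu3⟩)
              · exact ⟨Finset.mem_insert_self _ _, hyr, hpy⟩
              · exact ⟨Finset.mem_insert_of_mem hu1, hu2, by rw [hpag u hu1]; exact hu3⟩
          rw [hch]
          classical
          have hc0K : DLConcept.ex S C ∈ K D RIA := hG.lab_sub w hC
          have hnf : DLConcept.ex S C ∉
              (K D RIA).filter (fun c => FiredE RIA t w c) := by
            rw [Finset.mem_filter]
            rintro ⟨-, h | h⟩
            · exact hnew h
            · exact hnb (emptyedge_blocked h)
          have hf' : FiredE RIA t' w (DLConcept.ex S C) := by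
            refine Or.inl ⟨y, Or.inl ⟨⟨?_, ?_, hpy⟩, S, ?_, Relation.ReflTransGen.refl⟩, ?_⟩
            · rw [hn]; exact Finset.mem_insert_self _ _
            · rw [hr]; exact hyr
            · rw [he, Function.update_self]; exact Finset.mem_singleton_self _
            · rw [hl, Function.update_self]; exact Finset.mem_singleton_self _
          have hsubF : insert (DLConcept.ex S C)
              ((K D RIA).filter (fun c => FiredE RIA t w c)) ⊆
              (K D RIA).filter (fun c => FiredE RIA t' w c) := by
            refine Finset.insert_subset (Finset.mem_filter.2 ⟨hc0K, hf'⟩) ?_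
            intro c hc
            rw [Finset.mem_filter] at hc ⊢
            exact ⟨hc.1, hmono w hw c hc.2⟩
          have hone : potSum D RIA t w + 1 ≤ potSum D RIA t' w := by
            have h1 := Finset.sum_le_sum_of_subset (f := SHIQTerm.w) hsubF
            rw [Finset.sum_insert hnf] at h1
            unfold potSum
            calc (∑ c ∈ (K D RIA).filter (fun c => FiredE RIA t w c), SHIQTerm.w c) + 1
                = SHIQTerm.w (DLConcept.ex S C) +
                  ∑ c ∈ (K D RIA).filter (fun c => FiredE RIA t w c), SHIQTerm.w c := by
                  simp [SHIQTerm.w]; ring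
              _ ≤ _ := h1
          calc (insert y (children t w)).card ≤ (children t w).card + 1 :=
                Finset.card_insert_le _ _
            _ ≤ potSum D RIA t w + 1 := by
                have := hG.child_bound w hw
                omega
            _ ≤ potSum D RIA t' w := hone
        · have hch : children t' w = children t w := by
            ext u
            rw [mem_children, mem_children, hn, hr]
            constructor
            · rintro ⟨hu1, hu2, hu3⟩
              rcases Finset.mem_insert.1 hu1 with rfl | hu1
              · rw [hpy] at hu3; exact absurd hu3.symm hwx
              · rw [hpag u hu1] at hu3
                exact ⟨hu1, hu2, hu3⟩
            · rintro ⟨hu1, hu2, hu3⟩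
              exact ⟨Finset.mem_insert_of_mem hu1, hu2, by rw [hpag u hu1]; exact hu3⟩
          rw [hch]
          exact (hG.child_bound w hw).trans (potSum_mono_of_firedE (hmono w hw))
  | geq x n S C ys hx hC hnb hnew hinj hfresh hn hr hp1 hp2 hl1 hl2 he1 he2 hq =>
      have hago : ∀ w ∈ t.nodes, ∀ i, w ≠ ys i :=
        fun w hw i h => hfresh i (h ▸ hw)
      have hyr : ∀ i, ys i ≠ t.root := fun i h => hfresh i (h ▸ t.root_mem)
      have hxys : ∀ i, x ≠ ys i := fun i h => hfresh i (h ▸ hx)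
      have hpag : ∀ w ∈ t.nodes, t'.parent w = t.parent w :=
        fun w hw => hp2 w (hago w hw)
      have hlag : ∀ w ∈ t.nodes, t'.lab w = t.lab w :=
        fun w hw => hl2 w (hago w hw)
      have heag : ∀ w ∈ t.nodes, t'.elb w = t.elb w :=
        fun w hw => he2 w (hago w hw)
      have hsubn : t.nodes ⊆ t'.nodes := by rw [hn]; exact Finset.subset_union_left
      have hymem : ∀ i, ys i ∈ t'.nodes := by
        intro i
        rw [hn]
        exact Finset.mem_union_right _ (Finset.mem_image.2 ⟨i, Finset.mem_univ _, rfl⟩)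
      have hmono : ∀ u ∈ t.nodes, ∀ c, FiredE RIA t u c → FiredE RIA t' u c := by
        intro u hu c hc
        exact firedE_mono hsubn hr hpag heag
          (fun v hv => by rw [hlag v hv])
          (fun a b h => (hq a b).2 (Or.inl h)) hu hc
      refine ⟨?_, ?_, ?_, ?_, ?_, ?_⟩
      · intro u
        by_cases h : ∃ i, u = ys i
        · obtain ⟨i, rfl⟩ := h
          rw [hl1 i]
          simpa using (K_atleast hD (hG.lab_sub x hC)).1
        · push_neg at h
          rw [hl2 u h]
          exact hG.lab_sub u
      · intro u
        by_cases h : ∃ i, u = ys i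
        · obtain ⟨i, rfl⟩ := h
          rw [he1 i]
          simpa using ESet_atleast (hG.lab_sub x hC)
        · push_neg at h
          rw [he2 u h]
          exact hG.elb_sub u
      · rw [hr, hpag _ t.root_mem]; exact hG.proot
      · intro u hu
        rw [hn] at hu
        rcases Finset.mem_union.1 hu with hu | hu
        · obtain ⟨k, hk, hkr⟩ := hG.depth_le u hu
          exact ⟨k, hk, by rw [hr, iterate_agree hG.proot hpag hu]; exact hkr⟩
        · obtain ⟨i, -, rfl⟩ := Finset.mem_image.1 hu
          refine ⟨t.depth x + 1, ?_, ?_⟩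
          · have := depth_le_of_not_blocked hG hx hnb
            omega
          · rw [hr, Function.iterate_succ_apply, hp1 i,
              iterate_agree hG.proot hpag hx]
            exact depth_spec hx
      · intro u hu
        rcases (hq u u).1 hu with h | ⟨i, j, hij, h1, h2⟩
        · exact hG.nirr u h
        · exact hij (hinj (h1 ▸ h2))
      · intro u hu
        rw [hn] at hu
        rcases Finset.mem_union.1 hu with hu | hu
        case inr =>
          obtain ⟨i, -, rfl⟩ := Finset.mem_image.1 hu
          have hempty : children t' (ys i) = ∅ := by
            rw [Finset.eq_empty_iff_forall_notMem]
            intro v hv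
            obtain ⟨hv1, hv2, hv3⟩ := mem_children.1 hv
            rw [hn] at hv1
            rcases Finset.mem_union.1 hv1 with hv1 | hv1
            · rw [hpag v hv1] at hv3
              have := t.parent_mem v hv1 (by rw [hr] at hv2; exact hv2)
              rw [hv3] at this
              exact hfresh i this
            · obtain ⟨j, -, rfl⟩ := Finset.mem_image.1 hv1
              rw [hp1 j] at hv3
              exact hfresh i (hv3 ▸ hx)
          rw [hempty]
          simp
        by_cases hwx : u = x
        case neg =>
          have hch : children t' u = children t u := by
            ext v
            rw [mem_children, mem_children, hn, hr]
            constructor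
            · rintro ⟨hv1, hv2, hv3⟩
              rcases Finset.mem_union.1 hv1 with hv1 | hv1
              · rw [hpag v hv1] at hv3
                exact ⟨hv1, hv2, hv3⟩
              · obtain ⟨j, -, rfl⟩ := Finset.mem_image.1 hv1
                rw [hp1 j] at hv3
                exact absurd hv3.symm hwx
            · rintro ⟨hv1, hv2, hv3⟩
              exact ⟨Finset.mem_union_left _ hv1, hv2, by rw [hpag v hv1]; exact hv3⟩
          rw [hch]
          exact (hG.child_bound u hu).trans (potSum_mono_of_firedE (hmono u hu))
        case pos =>
          subst hwx
          have hch : children t' u = children t u ∪ Finset.image ys Finset.univ := by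
            ext v
            rw [mem_children, Finset.mem_union, mem_children, hn, hr]
            constructor
            · rintro ⟨hv1, hv2, hv3⟩
              rcases Finset.mem_union.1 hv1 with hv1 | hv1
              · rw [hpag v hv1] at hv3
                exact Or.inl ⟨hv1, hv2, hv3⟩
              · exact Or.inr hv1
            · rintro (⟨hv1, hv2, hv3⟩ | hv1)
              · exact ⟨Finset.mem_union_left _ hv1, hv2, by rw [hpag v hv1]; exact hv3⟩
              · obtain ⟨j, -, rfl⟩ := Finset.mem_image.1 hv1
                exact ⟨Finset.mem_union_right _ hv1, hyr j, hp1 j⟩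
          rw [hch]
          classical
          have hc0K : DLConcept.atleast n S C ∈ K D RIA := hG.lab_sub u hC
          have hnf : DLConcept.atleast n S C ∉
              (K D RIA).filter (fun c => FiredE RIA t u c) := by
            rw [Finset.mem_filter]
            rintro ⟨-, h | h⟩
            · exact hnew h
            · exact hnb (emptyedge_blocked h)
          have hf' : FiredE RIA t' u (DLConcept.atleast n S C) := by
            refine Or.inl ⟨ys, fun i => ⟨Or.inl ⟨⟨hymem i, ?_, hp1 i⟩, S, ?_,
              Relation.ReflTransGen.refl⟩, ?_⟩, fun i j hij =>
              (hq _ _).2 (Or.inr ⟨i, j, hij, rfl, rfl⟩)⟩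
            · rw [hr]; exact hyr i
            · rw [he1 i]; exact Finset.mem_singleton_self _
            · rw [hl1 i]; exact Finset.mem_singleton_self _
          have hsubF : insert (DLConcept.atleast n S C)
              ((K D RIA).filter (fun c => FiredE RIA t u c)) ⊆
              (K D RIA).filter (fun c => FiredE RIA t' u c) := by
            refine Finset.insert_subset (Finset.mem_filter.2 ⟨hc0K, hf'⟩) ?_
            intro c hc
            rw [Finset.mem_filter] at hc ⊢
            exact ⟨hc.1, hmono u hu c hc.2⟩
          have hone : potSum D RIA t u + n ≤ potSum D RIA t' u := by
            have h1 := Finset.sum_le_sum_of_subset (f := SHIQTerm.w) hsubF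
            rw [Finset.sum_insert hnf] at h1
            unfold potSum
            have hw0 : SHIQTerm.w (DLConcept.atleast n S C) = n := rfl
            omega
          have hcard : (Finset.image ys Finset.univ).card = n := by
            rw [Finset.card_image_of_injective _ hinj]
            simp
          calc (children t u ∪ Finset.image ys Finset.univ).card
              ≤ (children t u).card + (Finset.image ys Finset.univ).card :=
                Finset.card_union_le _ _
            _ ≤ potSum D RIA t u + n := by
                have := hG.child_bound u hu
                omega
            _ ≤ potSum D RIA t' u := hone
  | leqSucc x y z n S C hx hC hnib hcount hy hz hCy hCz hyz hnq hyanc hzanc hn hr hp hlz hlo hez hey heo hq =>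
      obtain ⟨hSy, Sy', hSy', hsuby⟩ := succ_of_neighb hy hyanc
      obtain ⟨hSz, Sz', hSz', hsubz⟩ := succ_of_neighb hz hzanc
      have hlw : ∀ w, t.lab w ⊆ t'.lab w := by
        intro w
        rcases eq_or_ne w z with rfl | hwz
        · rw [hlz]; exact Finset.subset_union_left
        · rw [hlo w hwz]
      refine good_merge hG hn hr hp hlw ?_ ?_ ?_ ?_ ?_ hey hSy ?_ hq hnq
      · intro w
        rcases eq_or_ne w z with rfl | hwz
        · rw [hlz]; exact Finset.union_subset (hG.lab_sub w) (hG.lab_sub y)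
        · rw [hlo w hwz]; exact hG.lab_sub w
      · intro w
        rcases eq_or_ne w y with rfl | hwy
        · rw [hey]; exact Finset.empty_subset _
        rcases eq_or_ne w z with rfl | hwz
        · rw [hez]; exact Finset.union_subset (hG.elb_sub w) (hG.elb_sub y)
        · rw [heo w hwz hwy]; exact hG.elb_sub w
      · rw [hlz]; exact Finset.subset_union_right
      · intro w hwy
        rcases eq_or_ne w z with rfl | hwz
        · rw [hez]; exact Finset.subset_union_left
        · rw [heo w hwz hwy]
      · intro w hwy hwe
        rcases eq_or_ne w z with rfl | hwz
        · exact absurd (hwe ▸ hSz') (Finset.notMem_empty _)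
        · rw [heo w hwz hwy]; exact hwe
      · rintro S₀ ⟨S', hS', hsub⟩
        exact Or.inl ⟨succ_eqstruct hn hr hp hSz, S',
          by rw [hez]; exact Finset.mem_union_right _ hS', hsub⟩
  | leqAnc x y z n S C hx hC hnib hcount hy hz hCy hCz hyz hnq hyanc hzanc hn hr hp hlz hlo hex hey heo hq =>
      obtain ⟨hSy, Sy', hSy', hsuby⟩ := succ_of_neighb hy hyanc
      obtain ⟨hSzx, Sx', hSx', hsubx⟩ := parent_of_neighb_anc hz hzanc
      have hxr : x ≠ t.root := anc_ne_root hzanc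
      have hxe : t.elb x ≠ ∅ := fun h0 => hnib (emptyedge_iblocked ⟨hx, hxr, h0⟩)
      have hxy : x ≠ y := succ_ne hSy
      have hlw : ∀ w, t.lab w ⊆ t'.lab w := by
        intro w
        rcases eq_or_ne w z with rfl | hwz
        · rw [hlz]; exact Finset.subset_union_left
        · rw [hlo w hwz]
      refine good_merge hG hn hr hp hlw ?_ ?_ ?_ ?_ ?_ hey hSy ?_ hq hnq
      · intro w
        rcases eq_or_ne w z with rfl | hwz
        · rw [hlz]; exact Finset.union_subset (hG.lab_sub w) (hG.lab_sub y)
        · rw [hlo w hwz]; exact hG.lab_sub w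
      · intro w
        rcases eq_or_ne w y with rfl | hwy
        · rw [hey]; exact Finset.empty_subset _
        rcases eq_or_ne w x with rfl | hwx
        · rw [hex]
          refine Finset.union_subset (hG.elb_sub w) ?_
          intro s hs
          rcases Finset.mem_image.1 hs with ⟨s₀, hs₀, rfl⟩
          exact ESet_inv (hG.elb_sub y hs₀)
        · rw [heo w hwx hwy]; exact hG.elb_sub w
      · rw [hlz]; exact Finset.subset_union_right
      · intro w hwy
        rcases eq_or_ne w x with rfl | hwx
        · rw [hex]; exact Finset.subset_union_left
        · rw [heo w hwx hwy]
      · intro w hwy hwe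
        rcases eq_or_ne w x with rfl | hwx
        · exact absurd hwe hxe
        · rw [heo w hwx hwy]; exact hwe
      · rintro S₀ ⟨S', hS', hsub⟩
        refine Or.inr ⟨succ_eqstruct hn hr hp hSzx, S'.Inv, ?_, subrole_inv hsub⟩
        rw [hex]
        exact Finset.mem_union_right _ (Finset.mem_image.2 ⟨S', hS', rfl⟩)

end SHIQTerm

namespace SHIQTerm
open DLConcept

variable {Rp : Set ℕ} {RIA : List (Role × Role)} {D : DLConcept}

/-- Per-edge measure. -/
noncomputable def gE (D : DLConcept) (RIA : List (Role × Role)) (t : CTree)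
    (x : ℕ) : ℕ :=
  if t.elb x = ∅ then 0
  else 1 + ((ESet D RIA).card - (t.elb x ∩ ESet D RIA).card)

noncomputable def M2 (D : DLConcept) (RIA : List (Role × Role)) (t : CTree) : ℕ :=
  ∑ x ∈ t.nodes.erase t.root, gE D RIA t x

noncomputable def M3 (D : DLConcept) (RIA : List (Role × Role)) (t : CTree) : ℕ :=
  ∑ x ∈ t.nodes, ((K D RIA).card - (t.lab x ∩ K D RIA).card)

def Aw (D : DLConcept) (RIA : List (Role × Role)) : ℕ :=
  (ESet D RIA).card + (K D RIA).card + 2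

noncomputable def mu (D : DLConcept) (RIA : List (Role × Role)) (t : CTree) : ℕ :=
  (Nmax D RIA + 1 - t.nodes.card) * Aw D RIA + (M2 D RIA t + M3 D RIA t)

lemma gE_congr {t t' : CTree} {x : ℕ} (h : t'.elb x = t.elb x) :
    gE D RIA t' x = gE D RIA t x := by
  unfold gE
  rw [h]

lemma gE_le (t : CTree) (x : ℕ) : gE D RIA t x ≤ (ESet D RIA).card + 1 := by
  unfold gE
  split
  · omega
  · omega

lemma gE_le_of {t t' : CTree} {x : ℕ} (hsub : t.elb x ⊆ t'.elb x)
    (hne : t.elb x ≠ ∅) : gE D RIA t' x ≤ gE D RIA t x := by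
  unfold gE
  have hne' : t'.elb x ≠ ∅ := by
    intro h
    exact hne (Finset.subset_empty.1 (h ▸ hsub))
  rw [if_neg hne, if_neg hne']
  have : (t.elb x ∩ ESet D RIA).card ≤ (t'.elb x ∩ ESet D RIA).card :=
    Finset.card_le_card (Finset.inter_subset_inter hsub Finset.Subset.rfl)
  omega

lemma labterm_le {t t' : CTree} {x : ℕ} (h : t.lab x ⊆ t'.lab x) :
    (K D RIA).card - (t'.lab x ∩ K D RIA).card ≤
      (K D RIA).card - (t.lab x ∩ K D RIA).card := by
  have : (t.lab x ∩ K D RIA).card ≤ (t'.lab x ∩ K D RIA).card :=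
    Finset.card_le_card (Finset.inter_subset_inter h Finset.Subset.rfl)
  omega

lemma labterm_le' (t : CTree) (x : ℕ) :
    (K D RIA).card - (t.lab x ∩ K D RIA).card ≤ (K D RIA).card := by
  omega

lemma M3_le {t t' : CTree} (hn : t'.nodes = t.nodes)
    (hl : ∀ x, t.lab x ⊆ t'.lab x) : M3 D RIA t' ≤ M3 D RIA t := by
  unfold M3
  rw [hn]
  exact Finset.sum_le_sum (fun x _ => labterm_le (hl x))

lemma M3_lt {t t' : CTree} (hn : t'.nodes = t.nodes)
    (hl : ∀ x, t.lab x ⊆ t'.lab x) {x₀ : ℕ} {c₀ : DLConcept}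
    (hx₀ : x₀ ∈ t.nodes) (hcK : c₀ ∈ K D RIA) (hold : c₀ ∉ t.lab x₀)
    (hnew : c₀ ∈ t'.lab x₀) : M3 D RIA t' < M3 D RIA t := by
  unfold M3
  rw [hn]
  refine Finset.sum_lt_sum (fun x _ => labterm_le (hl x)) ⟨x₀, hx₀, ?_⟩
  have hlt : (t.lab x₀ ∩ K D RIA).card < (t'.lab x₀ ∩ K D RIA).card := by
    refine Finset.card_lt_card ⟨Finset.inter_subset_inter (hl x₀) Finset.Subset.rfl, ?_⟩
    intro hcon
    exact hold (Finset.mem_inter.1 (hcon (Finset.mem_inter.2 ⟨hnew, hcK⟩))).1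
  have hle : (t'.lab x₀ ∩ K D RIA).card ≤ (K D RIA).card :=
    Finset.card_le_card Finset.inter_subset_right
  omega

/-- Measure decrease for pure label steps. -/
lemma mu_lt_of_label {t t' : CTree} (hn : t'.nodes = t.nodes)
    (hr : t'.root = t.root) (he : t'.elb = t.elb)
    (hl : ∀ x, t.lab x ⊆ t'.lab x) {x₀ : ℕ} {c₀ : DLConcept}
    (hx₀ : x₀ ∈ t.nodes) (hcK : c₀ ∈ K D RIA) (hold : c₀ ∉ t.lab x₀)
    (hnew : c₀ ∈ t'.lab x₀) : mu D RIA t' < mu D RIA t := by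
  have hM2 : M2 D RIA t' = M2 D RIA t := by
    unfold M2
    rw [hn, hr]
    exact Finset.sum_congr rfl (fun x _ => gE_congr (by rw [he]))
  have hM3 : M3 D RIA t' < M3 D RIA t := M3_lt hn hl hx₀ hcK hold hnew
  unfold mu
  rw [hn, hM2]
  omega

/-- Measure decrease for merge steps. -/
lemma mu_lt_of_merge {t t' : CTree} {y : ℕ} (hn : t'.nodes = t.nodes)
    (hr : t'.root = t.root) (hl : ∀ x, t.lab x ⊆ t'.lab x)
    (hy : y ∈ t.nodes) (hyr : y ≠ t.root) (hyne : t.elb y ≠ ∅)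
    (hey : t'.elb y = ∅)
    (hother : ∀ x, x ≠ y → gE D RIA t' x ≤ gE D RIA t x) :
    mu D RIA t' < mu D RIA t := by
  have hM2 : M2 D RIA t' < M2 D RIA t := by
    unfold M2
    rw [hn, hr]
    refine Finset.sum_lt_sum ?_ ⟨y, Finset.mem_erase.2 ⟨hyr, hy⟩, ?_⟩
    · intro x hx
      rcases eq_or_ne x y with rfl | hxy
      · unfold gE
        rw [hey]
        simp
      · exact hother x hxy
    · unfold gE
      rw [if_neg hyne, hey]
      simp
  have hM3 : M3 D RIA t' ≤ M3 D RIA t := M3_le hn hl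
  unfold mu
  rw [hn]
  omega

end SHIQTerm
namespace SHIQTerm
open DLConcept

variable {Rp : Set ℕ} {RIA : List (Role × Role)} {D : DLConcept}

/-- Measure decrease for node-creating steps. -/
lemma mu_lt_of_create {t t' : CTree} {Y : Finset ℕ} (hY : Y.Nonempty)
    (hdisj : ∀ y ∈ Y, y ∉ t.nodes)
    (hn : t'.nodes = t.nodes ∪ Y) (hr : t'.root = t.root)
    (heag : ∀ x ∈ t.nodes, t'.elb x = t.elb x)
    (hlag : ∀ x ∈ t.nodes, t'.lab x = t.lab x)
    (hNle : t'.nodes.card ≤ Nmax D RIA) :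
    mu D RIA t' < mu D RIA t := by
  classical
  have hdis : Disjoint t.nodes Y :=
    Finset.disjoint_left.2 (fun a ha hb => hdisj a hb ha)
  have hcard : t'.nodes.card = t.nodes.card + Y.card := by
    rw [hn, Finset.card_union_of_disjoint hdis]
  have hrY : t.root ∉ Y := fun h => hdisj _ h t.root_mem
  have herase : t'.nodes.erase t'.root = (t.nodes.erase t.root) ∪ Y := by
    rw [hn, hr, Finset.erase_union_distrib, Finset.erase_eq_of_notMem hrY]
  have hdis2 : Disjoint (t.nodes.erase t.root) Y :=
    hdis.mono_left (Finset.erase_subset _ _)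
  have hM2 : M2 D RIA t' ≤ M2 D RIA t + Y.card * ((ESet D RIA).card + 1) := by
    unfold M2
    rw [herase, Finset.sum_union hdis2]
    have h1 : ∑ x ∈ t.nodes.erase t.root, gE D RIA t' x =
        ∑ x ∈ t.nodes.erase t.root, gE D RIA t x :=
      Finset.sum_congr rfl (fun x hx => gE_congr (heag x (Finset.mem_of_mem_erase hx)))
    have h2 : ∑ x ∈ Y, gE D RIA t' x ≤ Y.card * ((ESet D RIA).card + 1) := by
      have := Finset.sum_le_card_nsmul Y (gE D RIA t') ((ESet D RIA).card + 1)
        (fun x _ => gE_le t' x)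
      simpa [smul_eq_mul] using this
    omega
  have hM3 : M3 D RIA t' ≤ M3 D RIA t + Y.card * (K D RIA).card := by
    unfold M3
    rw [hn, Finset.sum_union hdis]
    have h1 : ∑ x ∈ t.nodes, ((K D RIA).card - (t'.lab x ∩ K D RIA).card) =
        ∑ x ∈ t.nodes, ((K D RIA).card - (t.lab x ∩ K D RIA).card) :=
      Finset.sum_congr rfl (fun x hx => by rw [hlag x hx])
    have h2 : ∑ x ∈ Y, ((K D RIA).card - (t'.lab x ∩ K D RIA).card) ≤
        Y.card * (K D RIA).card := by
      have := Finset.sum_le_card_nsmul Y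
        (fun x => (K D RIA).card - (t'.lab x ∩ K D RIA).card) ((K D RIA).card)
        (fun x _ => labterm_le' t' x)
      simpa [smul_eq_mul] using this
    omega
  have hm1 : 1 ≤ Y.card := Finset.card_pos.2 hY
  have hc' : t.nodes.card + Y.card ≤ Nmax D RIA := by
    rw [← hcard]; exact hNle
  have hsplit : Nmax D RIA + 1 - t.nodes.card =
      (Nmax D RIA + 1 - t'.nodes.card) + Y.card := by omega
  have hAw : Y.card * Aw D RIA =
      Y.card * ((ESet D RIA).card + 1) + Y.card * (K D RIA).card + Y.card := by
    unfold Aw; ring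
  unfold mu
  rw [hsplit, add_mul]
  have h3 : M2 D RIA t' + M3 D RIA t' < Y.card * Aw D RIA +
      (M2 D RIA t + M3 D RIA t) := by
    linarith
  linarith

end SHIQTerm

namespace SHIQTerm
open DLConcept

variable {Rp : Set ℕ} {RIA : List (Role × Role)} {D : DLConcept}

theorem step_mu (hD : D.IsNNF) {t t' : CTree} (hG : GoodT RIA D t)
    (hG' : GoodT RIA D t') (hst : Step Rp RIA t t') :
    mu D RIA t' < mu D RIA t := by
  cases hst with
  | conj x C₁ C₂ hx hC hnib hnew hn hr hp hl he hq =>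
      have hK : DLConcept.and C₁ C₂ ∈ K D RIA := hG.lab_sub x hC
      have hlw : ∀ z, t.lab z ⊆ t'.lab z := by
        intro z; rw [hl]; exact update_lab_subset Finset.subset_union_left z
      have hmem : ∀ c ∈ ({C₁, C₂} : Finset DLConcept), c ∈ t'.lab x := by
        intro c hc
        rw [hl, Function.update_self]
        exact Finset.mem_union_right _ hc
      by_cases h1 : C₁ ∈ t.lab x
      · have h2 : C₂ ∉ t.lab x := by
          intro h2
          exact hnew (Finset.insert_subset h1 (Finset.singleton_subset_iff.2 h2))
        exact mu_lt_of_label hn hr he hlw hx (K_and hD hK).2 h2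
          (hmem C₂ (by simp))
      · exact mu_lt_of_label hn hr he hlw hx (K_and hD hK).1 h1
          (hmem C₁ (by simp))
  | disj x C₁ C₂ E hx hC hnib hnew hE hn hr hp hl he hq =>
      have hK : DLConcept.or C₁ C₂ ∈ K D RIA := hG.lab_sub x hC
      have hlw : ∀ z, t.lab z ⊆ t'.lab z := by
        intro z; rw [hl]; exact update_lab_subset (Finset.subset_insert _ _) z
      have hEK : E ∈ K D RIA := by
        rcases hE with rfl | rfl
        · exact (K_or hD hK).1
        · exact (K_or hD hK).2
      have hEold : E ∉ t.lab x := by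
        rcases hE with rfl | rfl
        · exact hnew.1
        · exact hnew.2
      refine mu_lt_of_label hn hr he hlw hx hEK hEold ?_
      rw [hl, Function.update_self]
      exact Finset.mem_insert_self _ _
  | all x y S C hx hC hnib hng hnew hn hr hp hl he hq =>
      have hK : DLConcept.all S C ∈ K D RIA := hG.lab_sub x hC
      have hlw : ∀ z, t.lab z ⊆ t'.lab z := by
        intro z; rw [hl]; exact update_lab_subset (Finset.subset_insert _ _) z
      refine mu_lt_of_label hn hr he hlw (neighb_mem hng hx) (K_all_body hD hK)
        hnew ?_
      rw [hl, Function.update_self]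
      exact Finset.mem_insert_self _ _
  | allTrans x y R S C hx hC hnib htr hsub hng hnew hn hr hp hl he hq =>
      have hK : DLConcept.all S C ∈ K D RIA := hG.lab_sub x hC
      have hlw : ∀ z, t.lab z ⊆ t'.lab z := by
        intro z; rw [hl]; exact update_lab_subset (Finset.subset_insert _ _) z
      refine mu_lt_of_label hn hr he hlw (neighb_mem hng hx) (K_all_sub hK hsub)
        hnew ?_
      rw [hl, Function.update_self]
      exact Finset.mem_insert_self _ _
  | choose x y n S C E hx hC hnib hng hnew hE hn hr hp hl he hq =>
      have hK : C ∈ K D RIA ∧ C.nnfNeg ∈ K D RIA := by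
        rcases hC with hC | hC
        · exact K_atleast hD (hG.lab_sub x hC)
        · exact K_atmost hD (hG.lab_sub x hC)
      have hlw : ∀ z, t.lab z ⊆ t'.lab z := by
        intro z; rw [hl]; exact update_lab_subset (Finset.subset_insert _ _) z
      have hEK : E ∈ K D RIA := by
        rcases hE with rfl | rfl
        · exact hK.1
        · exact hK.2
      have hEold : E ∉ t.lab y := by
        rcases hE with rfl | rfl
        · exact hnew.1
        · exact hnew.2
      refine mu_lt_of_label hn hr he hlw (neighb_mem hng hx) hEK hEold ?_
      rw [hl, Function.update_self]
      exact Finset.mem_insert_self _ _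
  | exists_ x y S C hx hC hnb hnew hy hn hr hp hl he hq =>
      refine mu_lt_of_create (Y := {y}) ⟨y, Finset.mem_singleton_self y⟩ ?_ ?_ hr
        ?_ ?_ (card_nodes_le hG')
      · intro z hz
        rw [Finset.mem_singleton] at hz
        subst hz
        exact hy
      · rw [hn, Finset.insert_eq, Finset.union_comm]
      · intro z hz
        rw [he]
        exact Function.update_of_ne (show z ≠ y from fun h => hy (h ▸ hz)) _ _
      · intro z hz
        rw [hl]
        exact Function.update_of_ne (show z ≠ y from fun h => hy (h ▸ hz)) _ _
  | geq x n S C ys hx hC hnb hnew hinj hfresh hn hr hp1 hp2 hl1 hl2 he1 he2 hq =>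
      have hnpos : 0 < n := by
        rcases Nat.eq_zero_or_pos n with rfl | h
        · exact absurd ⟨fun i => i.elim0, fun i => i.elim0, fun i j _ => i.elim0⟩
            hnew
        · exact h
      refine mu_lt_of_create (Y := Finset.image ys Finset.univ) ?_ ?_ hn hr ?_ ?_
        (card_nodes_le hG')
      · obtain ⟨i⟩ := Fin.pos_iff_nonempty.1 hnpos
        exact ⟨ys i, Finset.mem_image.2 ⟨i, Finset.mem_univ _, rfl⟩⟩
      · intro z hz
        obtain ⟨i, -, rfl⟩ := Finset.mem_image.1 hz
        exact hfresh i
      · intro z hz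
        exact he2 z (fun i h => hfresh i (h ▸ hz))
      · intro z hz
        exact hl2 z (fun i h => hfresh i (h ▸ hz))
  | leqSucc x y z n S C hx hC hnib hcount hy hz hCy hCz hyz hnq hyanc hzanc hn hr hp hlz hlo hez hey heo hq =>
      obtain ⟨hSy, Sy', hSy', hsuby⟩ := succ_of_neighb hy hyanc
      obtain ⟨hSz, Sz', hSz', hsubz⟩ := succ_of_neighb hz hzanc
      have hlw : ∀ u, t.lab u ⊆ t'.lab u := by
        intro u
        rcases eq_or_ne u z with rfl | huz
        · rw [hlz]; exact Finset.subset_union_left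
        · rw [hlo u huz]
      refine mu_lt_of_merge hn hr hlw hSy.1 hSy.2.1 ?_ hey ?_
      · intro h0
        exact Finset.notMem_empty _ (h0 ▸ hSy')
      · intro u huy
        rcases eq_or_ne u z with rfl | huz
        · exact gE_le_of (by rw [hez]; exact Finset.subset_union_left)
            (fun h0 => Finset.notMem_empty _ (h0 ▸ hSz'))
        · exact le_of_eq (gE_congr (heo u huz huy))
  | leqAnc x y z n S C hx hC hnib hcount hy hz hCy hCz hyz hnq hyanc hzanc hn hr hp hlz hlo hex hey heo hq =>
      obtain ⟨hSy, Sy', hSy', hsuby⟩ := succ_of_neighb hy hyanc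
      have hxr : x ≠ t.root := anc_ne_root hzanc
      have hxe : t.elb x ≠ ∅ := fun h0 => hnib (emptyedge_iblocked ⟨hx, hxr, h0⟩)
      have hlw : ∀ u, t.lab u ⊆ t'.lab u := by
        intro u
        rcases eq_or_ne u z with rfl | huz
        · rw [hlz]; exact Finset.subset_union_left
        · rw [hlo u huz]
      refine mu_lt_of_merge hn hr hlw hSy.1 hSy.2.1 ?_ hey ?_
      · intro h0
        exact Finset.notMem_empty _ (h0 ▸ hSy')
      · intro u huy
        rcases eq_or_ne u x with rfl | hux
        · exact gE_le_of (by rw [hex]; exact Finset.subset_union_left) hxe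
        · exact le_of_eq (gE_congr (heo u hux huy))

/-- The initial tree satisfies the invariant. -/
lemma good_init : GoodT RIA D (initTree D) := by
  refine ⟨?_, ?_, rfl, ?_, fun x h => h, ?_⟩
  · intro x c hc
    simp only [initTree] at hc
    split at hc
    · rw [Finset.mem_singleton.1 hc]
      exact K_D
    · exact absurd hc (Finset.notMem_empty _)
  · intro x c hc
    exact absurd hc (Finset.notMem_empty _)
  · intro x hx
    simp only [initTree, Finset.mem_singleton] at hx
    exact ⟨0, by omega, by simpa [initTree] using hx⟩
  · intro x hx
    have : children (initTree D) x = ∅ := by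
      rw [Finset.eq_empty_iff_forall_notMem]
      intro u hu
      obtain ⟨hu1, hu2, -⟩ := mem_children.1 hu
      simp only [initTree, Finset.mem_singleton] at hu1
      exact hu2 hu1
    rw [this]
    simp

lemma no_descent (f : ℕ → ℕ) (h : ∀ n, f (n + 1) < f n) : False := by
  have key : ∀ n, f n + n ≤ f 0 := by
    intro n
    induction n with
    | zero => omega
    | succ n ih =>
        have := h n
        omega
  have := key (f 0 + 1)
  omega

end SHIQTerm




/-- **Termination.** The SHIQ tableaux algorithm terminates: there is
no infinite sequence of expansion-rule applications starting from the initial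
completion tree for a SHIQ-concept `D` in NNF. -/
theorem shiq_algorithm_terminates (Rp : Set ℕ) (RIA : List (Role × Role))
    (D : DLConcept) (hNNF : D.IsNNF) (hSHIQ : D.IsSHIQ Rp RIA) :
    ¬ ∃ f : ℕ → CTree, f 0 = initTree D ∧ ∀ n, Step Rp RIA (f n) (f (n + 1)) := by
  rintro ⟨f, h0, hstep⟩
  have hG : ∀ n, SHIQTerm.GoodT RIA D (f n) := by
    intro n
    induction n with
    | zero => rw [h0]; exact SHIQTerm.good_init
    | succ n ih => exact SHIQTerm.step_good hNNF ih (hstep n)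
  exact SHIQTerm.no_descent (fun n => SHIQTerm.mu D RIA (f n))
    (fun n => SHIQTerm.step_mu hNNF (hG n) (hG (n + 1)) (hstep n))
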